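/- arXiv:2207.04667 — 6 statements merged into one kernel-verified Lean document; each statement's English description precedes it below -/
import Mathlib

section
/- Let g : ℝ → ℝ be nondecreasing, continuous, with g(0) = 0, and suppose ∫₁^∞ s^{-p-1} (ln s)^q (g(s) - g(-s)) ds < ∞ for some p > 1 and q ≥ 0. Let (Ω, μ) be a finite measure space and v : Ω → ℝ measurable such that for all s > 1, μ({x : |v(x)| > s}) ≤ C s^{-p}(1 + ln s)^q for some constant C. Then g(|v|), g(-|v|) and g(v) are all μ-integrable on Ω. -/
/-!
Put `G s = g s - g (-s)`, which is nondecreasing and nonnegative on `[0, ∞)` and dominates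
`|g t|` for `|t| ≤ s`, so it suffices to show `G ∘ |v| ∈ L¹(μ)`. Monotonicity gives the
dyadic averaging bound `G r ≤ ∫_r^{2r} 2 G(s)/s ds`; integrating it over `x` with `r = |v x|`
and swapping the integrals (Tonelli) yields
`∫ G(|v|) dμ ≤ G(e) μ(Ω) + ∫_e^∞ (2 G(s)/s) μ(|v| > s/2) ds`
(the cutoff `e` makes `s/2 > 1` and `log s ≥ 1`), and the distribution bound at `s/2` turns the last integrand into a multiple of
`s^(-p-1) (log s)^q G(s)`, which is integrable by assumption.
-/

open MeasureTheory Set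

theorem ofReal_le_setLIntegral_Ioo_two_mul {f : ℝ → ℝ} {r : ℝ} (hr : 0 < r)
    (hf : MonotoneOn f (Icc r (2 * r))) (hfr : 0 ≤ f r) :
    ENNReal.ofReal (f r) ≤ ∫⁻ s in Ioo r (2 * r), ENNReal.ofReal (2 * f s / s) := by
  have hpt : ∀ s ∈ Ioo r (2 * r), f r / r ≤ 2 * f s / s := by
    intro s ⟨hrs, hs2r⟩
    have hfrs : f r ≤ f s :=
      hf (left_mem_Icc.2 (by linarith)) ⟨hrs.le, hs2r.le⟩ hrs.le
    rw [div_le_div_iff₀ hr (hr.trans hrs)]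
    nlinarith
  calc ENNReal.ofReal (f r)
      = ENNReal.ofReal (f r / r) * volume (Ioo r (2 * r)) := by
        rw [Real.volume_Ioo, ← ENNReal.ofReal_mul' (by linarith)]
        congr 1
        field_simp
        ring
    _ = ∫⁻ _ in Ioo r (2 * r), ENNReal.ofReal (f r / r) := (setLIntegral_const _ _).symm
    _ ≤ ∫⁻ s in Ioo r (2 * r), ENNReal.ofReal (2 * f s / s) :=
        setLIntegral_mono' measurableSet_Ioo fun s hs => ENNReal.ofReal_le_ofReal (hpt s hs)

theorem lintegral_setLIntegral_Ioo_two_mul_le {Ω : Type*} [MeasurableSpace Ω]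
    (μ : Measure Ω) [SFinite μ] (ν : Measure ℝ) [SFinite ν] {u : Ω → ℝ} (hu : Measurable u)
    {k : ℝ → ENNReal} (hk : Measurable k) :
    ∫⁻ x, ∫⁻ s in Ioo (u x) (2 * u x), k s ∂ν ∂μ ≤ ∫⁻ s, k s * μ {x | s / 2 < u x} ∂ν := by
  set E : Set (Ω × ℝ) := {z | u z.1 < z.2 ∧ z.2 < 2 * u z.1}
  have hE : MeasurableSet E :=
    (measurableSet_lt (hu.comp measurable_fst) measurable_snd).inter
      (measurableSet_lt measurable_snd ((hu.comp measurable_fst).const_mul 2))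
  have hmeas : Measurable (Function.uncurry fun x s => (Ioo (u x) (2 * u x)).indicator k s) :=
    show Measurable (E.indicator (k ∘ Prod.snd)) from (hk.comp measurable_snd).indicator hE
  simp_rw [← lintegral_indicator measurableSet_Ioo]
  rw [lintegral_lintegral_swap hmeas.aemeasurable]
  refine lintegral_mono fun s => ?_
  have hEs : MeasurableSet {x | u x < s ∧ s < 2 * u x} :=
    (measurableSet_lt hu measurable_const).inter (measurableSet_lt measurable_const
      (hu.const_mul 2))
  calc ∫⁻ x, (Ioo (u x) (2 * u x)).indicator k s ∂μ
      = ∫⁻ x, {x | u x < s ∧ s < 2 * u x}.indicator (fun _ => k s) x ∂μ := rfl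
    _ = k s * μ {x | u x < s ∧ s < 2 * u x} := lintegral_indicator_const hEs _
    _ ≤ k s * μ {x | s / 2 < u x} :=
        mul_le_mul_right (measure_mono fun x (hx : u x < s ∧ s < 2 * u x) =>
          show s / 2 < u x by linarith [hx.2]) _

theorem half_rpow_neg_mul_one_add_log_rpow_le {p q s : ℝ} (hq : 0 ≤ q) (hs : Real.exp 1 ≤ s) :
    (s / 2) ^ (-p) * (1 + Real.log (s / 2)) ^ q ≤
      2 ^ p * 2 ^ q * (s ^ (-p) * Real.log s ^ q) := by
  have hs0 : 0 < s := (Real.exp_pos 1).trans_le hs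
  have hlog : 1 ≤ Real.log s := (Real.le_log_iff_exp_le hs0).2 hs
  have hlog_half : Real.log (s / 2) = Real.log s - Real.log 2 :=
    Real.log_div hs0.ne' two_ne_zero
  have hlog2 : 0 < Real.log 2 := Real.log_pos one_lt_two
  have hpow : (s / 2) ^ (-p) = 2 ^ p * s ^ (-p) := by
    rw [Real.div_rpow hs0.le zero_le_two, Real.rpow_neg zero_le_two]
    field_simp
  have hlog_pow : (1 + Real.log (s / 2)) ^ q ≤ 2 ^ q * Real.log s ^ q := by
    rw [← Real.mul_rpow zero_le_two (by linarith)]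
    exact Real.rpow_le_rpow (by linarith [Real.log_two_lt_d9]) (by linarith) hq
  rw [hpow]
  calc 2 ^ p * s ^ (-p) * (1 + Real.log (s / 2)) ^ q
      ≤ 2 ^ p * s ^ (-p) * (2 ^ q * Real.log s ^ q) := by gcongr
    _ = 2 ^ p * 2 ^ q * (s ^ (-p) * Real.log s ^ q) := by ring

theorem measure_half_lt_le_of_forall_measure_lt_le {Ω : Type*} [MeasurableSpace Ω]
    {μ : Measure Ω} {u : Ω → ℝ} {p q C : ℝ} (hq : 0 ≤ q)
    (he : ∀ s : ℝ, 1 < s →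
      μ {x | s < u x} ≤ ENNReal.ofReal (C * s ^ (-p) * (1 + Real.log s) ^ q))
    {s : ℝ} (hs : Real.exp 1 ≤ s) :
    μ {x | s / 2 < u x} ≤
      ENNReal.ofReal (2 ^ p * 2 ^ q * max C 0 * (s ^ (-p) * Real.log s ^ q)) := by
  have hs2 : 1 < s / 2 := by
    linarith [Real.add_one_lt_exp one_ne_zero]
  have hbase : 0 ≤ (s / 2) ^ (-p) * (1 + Real.log (s / 2)) ^ q :=
    mul_nonneg (Real.rpow_nonneg (by linarith) _)
      (Real.rpow_nonneg (by linarith [Real.log_pos hs2]) _)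
  refine (he (s / 2) hs2).trans (ENNReal.ofReal_le_ofReal ?_)
  calc C * (s / 2) ^ (-p) * (1 + Real.log (s / 2)) ^ q
      = C * ((s / 2) ^ (-p) * (1 + Real.log (s / 2)) ^ q) := mul_assoc _ _ _
    _ ≤ max C 0 * ((s / 2) ^ (-p) * (1 + Real.log (s / 2)) ^ q) :=
        mul_le_mul_of_nonneg_right (le_max_left C 0) hbase
    _ ≤ max C 0 * (2 ^ p * 2 ^ q * (s ^ (-p) * Real.log s ^ q)) :=
        mul_le_mul_of_nonneg_left (half_rpow_neg_mul_one_add_log_rpow_le hq hs)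
          (le_max_right C 0)
    _ = 2 ^ p * 2 ^ q * max C 0 * (s ^ (-p) * Real.log s ^ q) := by ring

theorem ofReal_le_add_setLIntegral_Ioo_two_mul {f : ℝ → ℝ} (hf : MonotoneOn f (Ici 0))
    (hf0 : 0 ≤ f 0) {c r : ℝ} (hc : 0 < c) (hr : 0 ≤ r) :
    ENNReal.ofReal (f r) ≤ ENNReal.ofReal (f c) +
      ∫⁻ s in Ioo r (2 * r), ENNReal.ofReal (2 * f s / s) ∂volume.restrict (Ioi c) := by
  rcases le_or_gt r c with hrc | hrc
  · exact le_add_right (ENNReal.ofReal_le_ofReal (hf hr hc.le hrc))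
  · have hsub : Ioo r (2 * r) ⊆ Ioi c := fun s hs => hrc.trans hs.1
    refine le_add_left ?_
    rw [Measure.restrict_restrict measurableSet_Ioo, inter_eq_left.2 hsub]
    exact ofReal_le_setLIntegral_Ioo_two_mul (hc.trans hrc)
      (hf.mono fun s hs => hr.trans hs.1) (hf0.trans (hf self_mem_Ici hr hr))

theorem ofReal_mul_measure_half_lt_le {Ω : Type*} [MeasurableSpace Ω]
    {μ : Measure Ω} {u : Ω → ℝ} {p q C : ℝ} (hq : 0 ≤ q)
    (he : ∀ s : ℝ, 1 < s →
      μ {x | s < u x} ≤ ENNReal.ofReal (C * s ^ (-p) * (1 + Real.log s) ^ q))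
    {F s : ℝ} (hF : 0 ≤ F) (hs : Real.exp 1 ≤ s) :
    ENNReal.ofReal (2 * F / s) * μ {x | s / 2 < u x} ≤
      ‖2 * (2 ^ p * 2 ^ q * max C 0) * (s ^ (-p - 1) * Real.log s ^ q * F)‖ₑ := by
  have hs0 : 0 < s := (Real.exp_pos 1).trans_le hs
  calc ENNReal.ofReal (2 * F / s) * μ {x | s / 2 < u x}
      ≤ ENNReal.ofReal (2 * F / s) *
          ENNReal.ofReal (2 ^ p * 2 ^ q * max C 0 * (s ^ (-p) * Real.log s ^ q)) := by
        gcongr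
        exact measure_half_lt_le_of_forall_measure_lt_le hq he hs
    _ = ENNReal.ofReal
          (2 * (2 ^ p * 2 ^ q * max C 0) * (s ^ (-p - 1) * Real.log s ^ q * F)) := by
        rw [← ENNReal.ofReal_mul (by positivity), Real.rpow_sub_one hs0.ne']
        congr 1
        field_simp
    _ ≤ _ := Real.ofReal_le_enorm _

theorem integrable_comp_of_measure_lt_le_rpow_mul_log {Ω : Type*} [MeasurableSpace Ω]
    {μ : Measure Ω} [IsFiniteMeasure μ] {f : ℝ → ℝ} (hf : MonotoneOn f (Ici 0))
    (hf0 : 0 ≤ f 0) (hfm : Measurable f) {p q C : ℝ} (hq : 0 ≤ q)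
    (hint : IntegrableOn (fun s : ℝ => s ^ (-p - 1) * Real.log s ^ q * f s) (Ici 1))
    {u : Ω → ℝ} (hu : Measurable u) (hu0 : ∀ x, 0 ≤ u x)
    (he : ∀ s : ℝ, 1 < s →
      μ {x | s < u x} ≤ ENNReal.ofReal (C * s ^ (-p) * (1 + Real.log s) ^ q)) :
    Integrable (fun x => f (u x)) μ := by
  set c := Real.exp 1
  set D := 2 * (2 ^ p * 2 ^ q * max C 0)
  have hf_nonneg : ∀ t, 0 ≤ t → 0 ≤ f t := fun t ht => hf0.trans (hf self_mem_Ici ht ht)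
  have hk : Measurable fun s => ENNReal.ofReal (2 * f s / s) :=
    ((hfm.const_mul 2).div measurable_id).ennreal_ofReal
  have htail : ∀ s ∈ Ioi c, ENNReal.ofReal (2 * f s / s) * μ {x | s / 2 < u x} ≤
      ‖D * (s ^ (-p - 1) * Real.log s ^ q * f s)‖ₑ := fun s hs =>
    ofReal_mul_measure_half_lt_le hq he (hf_nonneg s ((Real.exp_pos 1).trans hs).le) hs.le
  have hfin : ∫⁻ s in Ioi c, ‖D * (s ^ (-p - 1) * Real.log s ^ q * f s)‖ₑ < ⊤ :=
    ((hint.mono_set fun s hs => (Real.one_le_exp zero_le_one).trans (le_of_lt hs)).const_mul D).2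
  refine ⟨(hfm.comp hu).aestronglyMeasurable, ?_⟩
  rw [hasFiniteIntegral_iff_ofReal (ae_of_all _ fun x => hf_nonneg _ (hu0 x))]
  calc ∫⁻ x, ENNReal.ofReal (f (u x)) ∂μ
      ≤ ∫⁻ x, ENNReal.ofReal (f c) + ∫⁻ s in Ioo (u x) (2 * u x),
          ENNReal.ofReal (2 * f s / s) ∂volume.restrict (Ioi c) ∂μ :=
        lintegral_mono fun x =>
          ofReal_le_add_setLIntegral_Ioo_two_mul hf hf0 (Real.exp_pos 1) (hu0 x)
    _ ≤ ENNReal.ofReal (f c) * μ univ + ∫⁻ s in Ioi c,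
          ENNReal.ofReal (2 * f s / s) * μ {x | s / 2 < u x} := by
        rw [lintegral_add_left measurable_const, lintegral_const]
        exact add_le_add le_rfl (lintegral_setLIntegral_Ioo_two_mul_le μ _ hu hk)
    _ ≤ ENNReal.ofReal (f c) * μ univ +
          ∫⁻ s in Ioi c, ‖D * (s ^ (-p - 1) * Real.log s ^ q * f s)‖ₑ :=
        add_le_add le_rfl (setLIntegral_mono' measurableSet_Ioi htail)
    _ < ⊤ := ENNReal.add_lt_top.2
        ⟨ENNReal.mul_lt_top ENNReal.ofReal_lt_top (measure_lt_top μ _), hfin⟩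

theorem abs_le_sub_neg_of_mem_Icc {g : ℝ → ℝ} (hg : Monotone g) (hg0 : g 0 = 0) {a t : ℝ}
    (ht : t ∈ Icc (-a) a) : |g t| ≤ g a - g (-a) := by
  have ha : 0 ≤ a := by linarith [ht.1, ht.2]
  have hlo := hg ht.1
  have hhi := hg ht.2
  have hneg : g (-a) ≤ 0 := hg0 ▸ hg (neg_nonpos.2 ha)
  have hpos : 0 ≤ g a := hg0 ▸ hg ha
  rw [abs_le]
  constructor <;> linarith

theorem stmt4_general (g : ℝ → ℝ) (hg : Monotone g) (hg0 : g 0 = 0)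
    (p q : ℝ) (hq : 0 ≤ q)
    (hint : IntegrableOn
      (fun s : ℝ => s ^ (-p - 1) * Real.log s ^ q * (g s - g (-s))) (Set.Ici 1))
    {Ω : Type*} [MeasurableSpace Ω] (μ : Measure Ω) [IsFiniteMeasure μ]
    (v : Ω → ℝ) (hv : Measurable v) (C : ℝ)
    (he : ∀ s : ℝ, 1 < s →
      μ {x | s < |v x|} ≤ ENNReal.ofReal (C * s ^ (-p) * (1 + Real.log s) ^ q)) :
    Integrable (fun x => g |v x|) μ ∧ Integrable (fun x => g (-|v x|)) μ ∧
      Integrable (fun x => g (v x)) μ := by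
  have hG : Integrable (fun x => g |v x| - g (-|v x|)) μ :=
    integrable_comp_of_measure_lt_le_rpow_mul_log (f := fun s => g s - g (-s))
      (fun a _ b _ hab => sub_le_sub (hg hab) (hg (neg_le_neg hab))) (by simp)
      (hg.measurable.sub (hg.measurable.comp measurable_neg)) hq hint hv.abs
      (fun x => abs_nonneg (v x)) he
  have hdom : ∀ {t : Ω → ℝ}, Measurable t → (∀ x, t x ∈ Icc (-|v x|) |v x|) →
      Integrable (fun x => g (t x)) μ := fun ht htv =>
    hG.mono' (hg.measurable.comp ht).aestronglyMeasurable
      (ae_of_all _ fun x => abs_le_sub_neg_of_mem_Icc hg hg0 (htv x))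
  refine ⟨hdom hv.abs fun x => ?_, hdom hv.abs.neg fun x => ?_, hdom hv fun x => abs_le.1 le_rfl⟩
  · exact ⟨by linarith [abs_nonneg (v x)], le_rfl⟩
  · exact ⟨le_rfl, by linarith [abs_nonneg (v x)]⟩

/-- Distribution-function integrability criterion: a subcritical growth condition on a
nondecreasing nonlinearity `g` together with a weak-`Lᵖ`-with-logarithm bound on the
distribution function of `v` implies `g(|v|), g(-|v|), g(v) ∈ L¹(μ)`. -/
theorem stmt4 (g : ℝ → ℝ) (hg : Monotone g) (hgc : Continuous g) (hg0 : g 0 = 0)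
    (p q : ℝ) (hp : 1 < p) (hq : 0 ≤ q)
    (hint : IntegrableOn
      (fun s : ℝ => s ^ (-p - 1) * Real.log s ^ q * (g s - g (-s))) (Set.Ici 1))
    {Ω : Type*} [MeasurableSpace Ω] (μ : Measure Ω) [IsFiniteMeasure μ]
    (v : Ω → ℝ) (hv : Measurable v) (C : ℝ)
    (he : ∀ s : ℝ, 1 < s →
      μ {x | s < |v x|} ≤ ENNReal.ofReal (C * s ^ (-p) * (1 + Real.log s) ^ q)) :
    Integrable (fun x => g |v x|) μ ∧ Integrable (fun x => g (-|v x|)) μ ∧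
      Integrable (fun x => g (v x)) μ :=
  stmt4_general g hg hg0 p q hq hint μ v hv C he
end

section
/- Let k ≥ 2, N ≥ k, γ ∈ ℝ with γ > 0, and r, d₁, d₂ ≥ 0 with d₁ ≤ br and d₂ ≤ bCr for constants b ∈ (1,2) and C ≥ 1. Then there exists a constant c = c(b,C,k,γ) > 0 such that ∫₀^{d₁+r} ∫₀^{d₂+r} s^{k-2}(s+y)^γ y² ds dy ≤ c (r+d₂)^γ (r+d₁)² r^k. -/
/-!
Bound the integrand by its value at the far corner of the rectangle, `(r + d₂)^(k-2) (2r + d₁ + d₂)^γ (r + d₁)²`,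
and the area by `(r + d₂)(r + d₁)`. Since `d₁`, `d₂` are at most fixed multiples of `r`, all the factors except
`(r + d₂)^γ (r + d₁)²` turn into a multiple of `r^k`, and `2r + d₁ + d₂ ≤ (b + 2)(r + d₂)`.
-/

open MeasureTheory Set

lemma norm_setIntegral_Ioc_le {f : ℝ → ℝ} {a b M : ℝ} (hab : a ≤ b)
    (hf : ∀ x ∈ Ioc a b, ‖f x‖ ≤ M) : ‖∫ x in Ioc a b, f x‖ ≤ M * (b - a) := by
  rw [← Real.volume_real_Ioc_of_le hab]
  exact norm_setIntegral_le_of_norm_le_const measure_Ioc_lt_top hf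

lemma norm_iteratedIntegral_Ioc_le {g : ℝ → ℝ → ℝ} {A B M : ℝ} (hA : 0 ≤ A) (hB : 0 ≤ B)
    (hg : ∀ y ∈ Ioc 0 B, ∀ s ∈ Ioc 0 A, ‖g s y‖ ≤ M) :
    ‖∫ y in Ioc 0 B, ∫ s in Ioc 0 A, g s y‖ ≤ M * A * B := by
  simpa using norm_setIntegral_Ioc_le hB fun y hy ↦ by
    simpa using norm_setIntegral_Ioc_le hA (hg y hy)

lemma rpow_mul_add_rpow_mul_sq_le {p γ s y A B : ℝ} (hp : 0 ≤ p) (hγ : 0 ≤ γ)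
    (hs : s ∈ Ioc 0 A) (hy : y ∈ Ioc 0 B) :
    ‖s ^ p * (s + y) ^ γ * y ^ 2‖ ≤ A ^ p * (A + B) ^ γ * B ^ 2 := by
  obtain ⟨hs₀, hsA⟩ := hs
  obtain ⟨hy₀, hyB⟩ := hy
  have hA : 0 ≤ A := hs₀.le.trans hsA
  have hB : 0 ≤ B := hy₀.le.trans hyB
  rw [Real.norm_of_nonneg (by positivity)]
  gcongr

lemma iteratedIntegral_rpow_mul_add_rpow_mul_sq_le {p γ A B : ℝ} (hp : 0 ≤ p) (hγ : 0 ≤ γ)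
    (hA : 0 ≤ A) (hB : 0 ≤ B) :
    ∫ y in Ioc 0 B, ∫ s in Ioc 0 A, s ^ p * (s + y) ^ γ * y ^ 2 ≤
      A ^ p * (A + B) ^ γ * B ^ 2 * A * B :=
  (le_abs_self _).trans <| norm_iteratedIntegral_Ioc_le hA hB fun _ hy _ hs ↦
    rpow_mul_add_rpow_mul_sq_le hp hγ hs hy

lemma rpow_sub_two_mul_mul_self {r : ℝ} (hr : 0 ≤ r) {k : ℕ} (hk : k ≠ 0) :
    r ^ ((k : ℝ) - 2) * r * r = r ^ k := by
  have hk' : (k : ℝ) - 2 + 2 ≠ 0 := by rwa [sub_add_cancel, Nat.cast_ne_zero]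
  rw [mul_assoc, ← sq, ← Real.rpow_two, ← Real.rpow_add' hr hk', sub_add_cancel, Real.rpow_natCast]

theorem stmt6_general (k : ℕ) (hk : 2 ≤ k) (γ : ℝ) (hγ : 0 < γ)
    (b C : ℝ) (hb1 : 1 < b) (hC : 1 ≤ C) :
    ∃ c : ℝ, 0 < c ∧ ∀ r d₁ d₂ : ℝ, 0 ≤ r → 0 ≤ d₁ → 0 ≤ d₂ →
      d₁ ≤ b * r → d₂ ≤ b * C * r →
      (∫ y in Set.Ioc (0 : ℝ) (d₁ + r), ∫ s in Set.Ioc (0 : ℝ) (d₂ + r),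
        s ^ ((k : ℝ) - 2) * (s + y) ^ γ * y ^ 2) ≤
      c * (r + d₂) ^ γ * (r + d₁) ^ 2 * r ^ k := by
  have hp : (0 : ℝ) ≤ k - 2 := by
    have : (2 : ℝ) ≤ k := by exact_mod_cast hk
    linarith
  have hbC : 0 < b * C + 1 := by nlinarith
  refine ⟨(b * C + 1) ^ ((k : ℝ) - 2) * (b * C + 1) * (b + 1) * (b + 2) ^ γ, by positivity, ?_⟩
  intro r d₁ d₂ hr hd₁ hd₂ h₁ h₂
  have hA : r + d₂ ≤ (b * C + 1) * r := by linarith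
  have hB : r + d₁ ≤ (b + 1) * r := by linarith
  have hAB : r + d₂ + (r + d₁) ≤ (b + 2) * (r + d₂) := by nlinarith
  calc _ ≤ (r + d₂) ^ ((k : ℝ) - 2) * (r + d₂ + (r + d₁)) ^ γ * (r + d₁) ^ 2 * (r + d₂) * (r + d₁) := by
        simpa only [add_comm r] using
          iteratedIntegral_rpow_mul_add_rpow_mul_sq_le hp hγ.le (by positivity) (by positivity)
    _ ≤ ((b * C + 1) * r) ^ ((k : ℝ) - 2) * ((b + 2) * (r + d₂)) ^ γ * (r + d₁) ^ 2 *
          ((b * C + 1) * r) * ((b + 1) * r) := by gcongr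
    _ = _ := by
        rw [Real.mul_rpow hbC.le hr, Real.mul_rpow (by linarith) (by positivity),
          ← rpow_sub_two_mul_mul_self hr (by omega : k ≠ 0)]
        ring

/-- Doubling estimate (positive exponent case): for `γ > 0`, `d₁ ≤ br`, `d₂ ≤ bCr`,
`∫₀^{d₁+r} ∫₀^{d₂+r} s^{k-2}(s+y)^γ y² ds dy ≤ c (r+d₂)^γ (r+d₁)² r^k`. -/
theorem stmt6 (k N : ℕ) (hk : 2 ≤ k) (hkN : k ≤ N) (γ : ℝ) (hγ : 0 < γ)
    (b C : ℝ) (hb1 : 1 < b) (hb2 : b < 2) (hC : 1 ≤ C) :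
    ∃ c : ℝ, 0 < c ∧ ∀ r d₁ d₂ : ℝ, 0 ≤ r → 0 ≤ d₁ → 0 ≤ d₂ →
      d₁ ≤ b * r → d₂ ≤ b * C * r →
      (∫ y in Set.Ioc (0 : ℝ) (d₁ + r), ∫ s in Set.Ioc (0 : ℝ) (d₂ + r),
        s ^ ((k : ℝ) - 2) * (s + y) ^ γ * y ^ 2) ≤
      c * (r + d₂) ^ γ * (r + d₁) ^ 2 * r ^ k :=
  stmt6_general k hk γ hγ b C hb1 hC
end

section
/- Let k ≥ 2, γ ∈ ℝ with -k ≤ γ ≤ 0, b ∈ (1,2), C_ξ ≥ 1, and r, d₁, d₂ ≥ 0 with d₁ ≤ br, d₂ ≤ bC_ξ r. Then there exists a constant c = c(b, C_ξ, k, γ) > 0 such that ∫₀^{d₁+r} ∫₀^{d₂+r} s^{k-2}(s+y)^γ y² ds dy ≤ c (d₁+r)² (d₂+r)^γ r^k. -/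
/-!
On the rectangle `(0, d₁ + r] × (0, d₂ + r]` the integrand is at most `(s + y)^(γ + k)`, since
`s^(k-2) ≤ (s + y)^(k-2)` and `y² ≤ (s + y)²`; as `γ + k ≥ 0` this is at most `S^(γ + k)` with
`S = 2r + d₁ + d₂`, so the integral is at most `S^(γ + k) (d₁ + r)(d₂ + r)`. Writing
`d₂ + r = (d₂ + r)^γ (d₂ + r)^(1 - γ)` with `1 - γ ≥ 0`, both `d₂ + r` and `S` are at most
`K r` with `K = 2 + b + b Cξ`, which leaves `K^(k+1) r^(k+1) (d₁ + r) ≤ K^(k+1) (d₁ + r)² r^k`.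
-/

open MeasureTheory Real

lemma norm_setIntegral_setIntegral_le_of_norm_le_const {α β E : Type*} [MeasurableSpace α]
    [MeasurableSpace β] [NormedAddCommGroup E] [NormedSpace ℝ E] {μ : Measure α} {ν : Measure β}
    {s : Set α} {t : Set β} {f : α → β → E} {C : ℝ} (hs : μ s < ⊤) (ht : ν t < ⊤)
    (hf : ∀ x ∈ s, ∀ y ∈ t, ‖f x y‖ ≤ C) :
    ‖∫ x in s, ∫ y in t, f x y ∂ν ∂μ‖ ≤ C * ν.real t * μ.real s :=
  norm_setIntegral_le_of_norm_le_const hs fun x hx =>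
    norm_setIntegral_le_of_norm_le_const ht (hf x hx)

lemma rpow_sub_two_mul_rpow_mul_sq_le {a γ s y : ℝ} (ha : 2 ≤ a) (hs : 0 ≤ s) (hy : 0 ≤ y) :
    s ^ (a - 2) * (s + y) ^ γ * y ^ 2 ≤ (s + y) ^ (γ + a) := by
  rcases (add_nonneg hs hy).eq_or_lt with hsy | hsy
  · obtain rfl : y = 0 := by linarith
    rw [zero_pow two_ne_zero, mul_zero]
    positivity
  calc s ^ (a - 2) * (s + y) ^ γ * y ^ 2
      ≤ (s + y) ^ (a - 2) * (s + y) ^ γ * (s + y) ^ 2 := by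
        gcongr <;> linarith
    _ = (s + y) ^ (γ + a) := by
        rw [← rpow_natCast, ← rpow_add hsy, ← rpow_add hsy]
        ring_nf

lemma mul_rpow_add_le_rpow_mul_pow {B S M γ : ℝ} {k : ℕ} (hB : 0 ≤ B) (hBM : B ≤ M)
    (hS : 0 ≤ S) (hSM : S ≤ M) (hγu : γ ≤ 1) (hγl : -(k : ℝ) ≤ γ) :
    B * S ^ (γ + k) ≤ B ^ γ * M ^ (k + 1) := by
  rcases hB.eq_or_lt with rfl | hB
  · rw [zero_mul]
    have : 0 ≤ M := hS.trans hSM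
    positivity
  have hM : 0 < M := hB.trans_le hBM
  calc B * S ^ (γ + k) = B ^ γ * (B ^ (1 - γ) * S ^ (γ + k)) := by
        rw [← mul_assoc, ← rpow_add hB, add_sub_cancel, rpow_one]
    _ ≤ B ^ γ * (M ^ (1 - γ) * M ^ (γ + k)) := by
        gcongr
        linarith
    _ = B ^ γ * M ^ (k + 1) := by
        rw [← rpow_add hM, ← rpow_natCast]
        push_cast
        ring_nf

lemma integral_Ioc_Ioc_rpow_sub_two_mul_rpow_mul_sq_le {a γ A B : ℝ} (ha : 2 ≤ a)
    (hγa : 0 ≤ γ + a) (hA : 0 ≤ A) (hB : 0 ≤ B) :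
    (∫ y in Set.Ioc 0 A, ∫ s in Set.Ioc 0 B, s ^ (a - 2) * (s + y) ^ γ * y ^ 2) ≤
      (A + B) ^ (γ + a) * B * A := by
  have hbound : ∀ y ∈ Set.Ioc 0 A, ∀ s ∈ Set.Ioc 0 B,
      ‖s ^ (a - 2) * (s + y) ^ γ * y ^ 2‖ ≤ (A + B) ^ (γ + a) := by
    rintro y ⟨hy, hyA⟩ s ⟨hs, hsB⟩
    rw [Real.norm_of_nonneg (by positivity)]
    exact (rpow_sub_two_mul_rpow_mul_sq_le ha hs.le hy.le).trans
      (rpow_le_rpow (by positivity) (by linarith) hγa)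
  have := norm_setIntegral_setIntegral_le_of_norm_le_const (μ := volume) (ν := volume)
    measure_Ioc_lt_top measure_Ioc_lt_top hbound
  rw [Real.volume_real_Ioc_of_le hA, Real.volume_real_Ioc_of_le hB, sub_zero, sub_zero] at this
  exact (le_abs_self _).trans this

theorem stmt7_general (k : ℕ) (hk : 2 ≤ k) (γ : ℝ) (hγl : -(k : ℝ) ≤ γ) (hγu : γ ≤ 0)
    (b Cξ : ℝ) (hb1 : 1 < b) (hCξ : 1 ≤ Cξ) :
    ∃ c : ℝ, 0 < c ∧ ∀ r d₁ d₂ : ℝ, 0 ≤ r → 0 ≤ d₁ → 0 ≤ d₂ →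
      d₁ ≤ b * r → d₂ ≤ b * Cξ * r →
      (∫ y in Set.Ioc (0 : ℝ) (d₁ + r), ∫ s in Set.Ioc (0 : ℝ) (d₂ + r),
        s ^ ((k : ℝ) - 2) * (s + y) ^ γ * y ^ 2) ≤
      c * (d₁ + r) ^ 2 * (d₂ + r) ^ γ * r ^ k := by
  have hK : 0 < 2 + b + b * Cξ := by nlinarith
  refine ⟨(2 + b + b * Cξ) ^ (k + 1), by positivity,
    fun r d₁ d₂ hr hd₁ hd₂ hd₁r hd₂r => ?_⟩
  have hSK : d₁ + r + (d₂ + r) ≤ (2 + b + b * Cξ) * r := by linarith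
  calc (∫ y in Set.Ioc (0 : ℝ) (d₁ + r), ∫ s in Set.Ioc (0 : ℝ) (d₂ + r),
        s ^ ((k : ℝ) - 2) * (s + y) ^ γ * y ^ 2)
      ≤ (d₁ + r + (d₂ + r)) ^ (γ + k) * (d₂ + r) * (d₁ + r) :=
        integral_Ioc_Ioc_rpow_sub_two_mul_rpow_mul_sq_le (by exact_mod_cast hk) (by linarith)
          (by linarith) (by linarith)
    _ = (d₁ + r) * ((d₂ + r) * (d₁ + r + (d₂ + r)) ^ (γ + k)) := by ring
    _ ≤ (d₁ + r) * ((d₂ + r) ^ γ * ((2 + b + b * Cξ) * r) ^ (k + 1)) := by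
        refine mul_le_mul_of_nonneg_left ?_ (by linarith)
        exact mul_rpow_add_le_rpow_mul_pow (by linarith) (by linarith) (by positivity) hSK
          (by linarith) hγl
    _ = (2 + b + b * Cξ) ^ (k + 1) * (d₂ + r) ^ γ * r ^ k * (r * (d₁ + r)) := by
        rw [mul_pow, pow_succ]; ring
    _ ≤ (2 + b + b * Cξ) ^ (k + 1) * (d₂ + r) ^ γ * r ^ k * (d₁ + r) ^ 2 := by
        gcongr
        nlinarith
    _ = (2 + b + b * Cξ) ^ (k + 1) * (d₁ + r) ^ 2 * (d₂ + r) ^ γ * r ^ k := by ring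

/-- Doubling estimate (nonpositive exponent case): for `-k ≤ γ ≤ 0`, `d₁ ≤ br`,
`d₂ ≤ bC_ξ r`, `∫₀^{d₁+r} ∫₀^{d₂+r} s^{k-2}(s+y)^γ y² ds dy ≤ c (d₁+r)² (d₂+r)^γ r^k`. -/
theorem stmt7 (k : ℕ) (hk : 2 ≤ k) (γ : ℝ) (hγl : -(k : ℝ) ≤ γ) (hγu : γ ≤ 0)
    (b Cξ : ℝ) (hb1 : 1 < b) (hb2 : b < 2) (hCξ : 1 ≤ Cξ) :
    ∃ c : ℝ, 0 < c ∧ ∀ r d₁ d₂ : ℝ, 0 ≤ r → 0 ≤ d₁ → 0 ≤ d₂ →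
      d₁ ≤ b * r → d₂ ≤ b * Cξ * r →
      (∫ y in Set.Ioc (0 : ℝ) (d₁ + r), ∫ s in Set.Ioc (0 : ℝ) (d₂ + r),
        s ^ ((k : ℝ) - 2) * (s + y) ^ γ * y ^ 2) ≤
      c * (d₁ + r) ^ 2 * (d₂ + r) ^ γ * r ^ k :=
  stmt7_general k hk γ hγl hγu b Cξ hb1 hCξ
end

section
/- Let k ≥ 2, γ ∈ ℝ with γ ≥ -k, b ∈ (1,2), C_ξ ≥ 1, and suppose 0 ≤ d₁ ≤ br and 0 ≤ d₂ ≤ bC_ξ r with r > 0. Then there exists a constant c = c(b,C_ξ,k,γ) > 0 such that ∫_{(d₁+r)/2}^{d₁+r} ∫_{(d₂+r)/2}^{d₂+r} s^{k-2}(s+y)^γ y² ds dy ≥ c (d₁+r)² (d₂+r)^γ r^k. -/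
/-!
On the box `(P/2, P] × (Q/2, Q]`, with `P = d₁ + r` and `Q = d₂ + r`, each factor of the
integrand has an explicit lower bound: `s ^ (k - 2) ≥ (r/2) ^ (k - 2)`, `y² ≥ (P/2)²`,
and, because `d₁ ≤ b r < 2 r` forces `P ≤ 3 Q`, also `s + y ∈ [Q/2, 4Q]`, so that
`(s + y) ^ γ ≥ min ((1/2) ^ γ) (4 ^ γ) Q ^ γ` whatever the sign of `γ`. The box has area
`PQ/4 ≥ r²/4`, which supplies the two missing powers of `r`.
-/

open MeasureTheory Set

theorem Real.min_rpow_mul_rpow_le {u v Q x : ℝ} (γ : ℝ) (hu : 0 < u) (hQ : 0 < Q)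
    (hux : u * Q ≤ x) (hxv : x ≤ v * Q) : min (u ^ γ) (v ^ γ) * Q ^ γ ≤ x ^ γ := by
  have hv : 0 ≤ v := hu.le.trans (le_of_mul_le_mul_right (hux.trans hxv) hQ)
  rw [min_mul_of_nonneg _ _ (Real.rpow_nonneg hQ.le γ), ← Real.mul_rpow hu.le hQ.le,
    ← Real.mul_rpow hv hQ.le]
  rcases le_or_gt 0 γ with hγ | hγ
  · exact (min_le_left _ _).trans (Real.rpow_le_rpow (mul_pos hu hQ).le hux hγ)
  · exact (min_le_right _ _).trans
      (Real.rpow_le_rpow_of_nonpos ((mul_pos hu hQ).trans_le hux) hxv hγ.le)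

theorem mul_volume_le_integral_Ioc_Ioc {f : ℝ → ℝ → ℝ} {a b c d M : ℝ}
    (hf : ContinuousOn (Function.uncurry f) (Icc a b ×ˢ Icc c d))
    (hM : ∀ y ∈ Ioc a b, ∀ s ∈ Ioc c d, M ≤ f y s) (hab : a ≤ b) (hcd : c ≤ d) :
    M * ((b - a) * (d - c)) ≤ ∫ y in Ioc a b, ∫ s in Ioc c d, f y s := by
  have hint :
      IntegrableOn (fun z : ℝ × ℝ => f z.1 z.2) (Ioc a b ×ˢ Ioc c d) (volume.prod volume) :=
    (hf.integrableOn_compact (isCompact_Icc.prod isCompact_Icc)).mono_set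
      (prod_mono Ioc_subset_Icc_self Ioc_subset_Icc_self)
  have hbox : (volume.prod volume).real (Ioc a b ×ˢ Ioc c d) = (b - a) * (d - c) := by
    rw [measureReal_prod_prod, Real.volume_real_Ioc_of_le hab, Real.volume_real_Ioc_of_le hcd]
  have hlow := setIntegral_ge_of_const_le_real (measurableSet_Ioc.prod measurableSet_Ioc)
    (by simp [Measure.prod_prod, ENNReal.mul_eq_top]) (fun z hz => hM z.1 hz.1 z.2 hz.2) hint
  rwa [hbox, setIntegral_prod _ hint] at hlow

theorem pow_mul_add_rpow_mul_sq_ge_of_mem_Ioc {m : ℕ} {γ r P Q y s : ℝ} (hr : 0 < r) (hrQ : r ≤ Q)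
    (hPQ : P ≤ 3 * Q) (hy : y ∈ Ioc (P / 2) P) (hs : s ∈ Ioc (Q / 2) Q) :
    (r / 2) ^ m * (min ((1 / 2) ^ γ) (4 ^ γ) * Q ^ γ) * (P / 2) ^ 2 ≤
      s ^ m * (s + y) ^ γ * y ^ 2 := by
  obtain ⟨hy₁, hy₂⟩ := hy
  obtain ⟨hs₁, hs₂⟩ := hs
  have hP : 0 < P := by linarith
  have hQ : 0 < Q := hr.trans_le hrQ
  have hsy : min ((1 / 2) ^ γ) (4 ^ γ) * Q ^ γ ≤ (s + y) ^ γ :=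
    Real.min_rpow_mul_rpow_le γ one_half_pos hQ (by linarith) (by linarith)
  have hsm : (r / 2) ^ m ≤ s ^ m := pow_le_pow_left₀ (by positivity) (by linarith) m
  have hy2 : (P / 2) ^ 2 ≤ y ^ 2 := pow_le_pow_left₀ (by positivity) hy₁.le 2
  have hs₀ : 0 ≤ s := by linarith
  exact mul_le_mul (mul_le_mul hsm hsy (by positivity) (by positivity)) hy2 (by positivity)
    (mul_nonneg (by positivity) (Real.rpow_nonneg (by linarith) γ))

theorem stmt8_general (k : ℕ) (hk : 2 ≤ k) (γ : ℝ)
    (b Cξ : ℝ) (hb2 : b < 2) :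
    ∃ c : ℝ, 0 < c ∧ ∀ r d₁ d₂ : ℝ, 0 < r → 0 ≤ d₁ → 0 ≤ d₂ →
      d₁ ≤ b * r → d₂ ≤ b * Cξ * r →
      c * (d₁ + r) ^ 2 * (d₂ + r) ^ γ * r ^ k ≤
      ∫ y in Set.Ioc ((d₁ + r) / 2) (d₁ + r), ∫ s in Set.Ioc ((d₂ + r) / 2) (d₂ + r),
        s ^ ((k : ℝ) - 2) * (s + y) ^ γ * y ^ 2 := by
  obtain ⟨m, rfl⟩ := Nat.exists_eq_add_of_le' hk
  set c₀ : ℝ := min ((1 / 2) ^ γ) (4 ^ γ)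
  refine ⟨c₀ / 2 ^ (m + 4), by positivity, fun r d₁ d₂ hr hd₁ hd₂ hd₁b _ => ?_⟩
  set P := d₁ + r
  set Q := d₂ + r
  have hPQ : P ≤ 3 * Q := by nlinarith
  have hP : 0 < P := by positivity
  have hQ : 0 < Q := by positivity
  have hexp : ((m + 2 : ℕ) : ℝ) - 2 = m := by push_cast; ring
  simp_rw [hexp, Real.rpow_natCast]
  have hcont : ContinuousOn (Function.uncurry fun y s : ℝ => s ^ m * (s + y) ^ γ * y ^ 2)
      (Icc (P / 2) P ×ˢ Icc (Q / 2) Q) := by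
    refine ((continuousOn_snd.pow m).mul (ContinuousOn.rpow_const (by fun_prop)
      fun z hz => Or.inl (ne_of_gt ?_))).mul (continuousOn_fst.pow 2)
    linarith [hz.1.1, hz.2.1]
  refine le_trans ?_ (mul_volume_le_integral_Ioc_Ioc hcont
    (fun y hy s hs => pow_mul_add_rpow_mul_sq_ge_of_mem_Ioc hr (by linarith) hPQ hy hs) (by linarith) (by linarith))
  have hrP : r ≤ P := by linarith
  calc c₀ / 2 ^ (m + 4) * P ^ 2 * Q ^ γ * r ^ (m + 2)
      = (r / 2) ^ m * (c₀ * Q ^ γ) * (P / 2) ^ 2 * (r / 2 * (r / 2)) := by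
        rw [div_pow r]; field_simp; ring
    _ ≤ (r / 2) ^ m * (c₀ * Q ^ γ) * (P / 2) ^ 2 * ((P - P / 2) * (Q - Q / 2)) := by
      gcongr <;> linarith

/-- Lower bound of the doubling estimate: restricting the integral to the upper halves
of both ranges, `∫_{(d₁+r)/2}^{d₁+r} ∫_{(d₂+r)/2}^{d₂+r} s^{k-2}(s+y)^γ y² ds dy ≥
c (d₁+r)² (d₂+r)^γ r^k`. -/
theorem stmt8 (k : ℕ) (hk : 2 ≤ k) (γ : ℝ) (hγ : -(k : ℝ) ≤ γ)
    (b Cξ : ℝ) (hb1 : 1 < b) (hb2 : b < 2) (hCξ : 1 ≤ Cξ) :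
    ∃ c : ℝ, 0 < c ∧ ∀ r d₁ d₂ : ℝ, 0 < r → 0 ≤ d₁ → 0 ≤ d₂ →
      d₁ ≤ b * r → d₂ ≤ b * Cξ * r →
      c * (d₁ + r) ^ 2 * (d₂ + r) ^ γ * r ^ k ≤
      ∫ y in Set.Ioc ((d₁ + r) / 2) (d₁ + r), ∫ s in Set.Ioc ((d₂ + r) / 2) (d₂ + r),
        s ^ ((k : ℝ) - 2) * (s + y) ^ γ * y ^ 2 :=
  stmt8_general k hk γ b Cξ hb2
end

section
/- Let N ≥ 3, γ < N, and α ∈ (0, min{k, γ}), where K ⊂ ℝ^N is a compact C² submanifold of codimension k (1 ≤ k ≤ N) contained in the boundary of a bounded C² domain Ω, and d_K(y) = dist(y,K). Then there exists C = C(α, γ, Ω, K) > 0 such that sup_{x ∈ Ω} ∫_Ω |x-y|^{-N+γ} d_K(y)^{-α} dy ≤ C. -/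
/-!
Near a point of `K`, a `C²` chart writes `K` as the graph of a map `Γ : ℝ^{N-k} → ℝ^k`, and `d_K(y)`
dominates, up to a constant, the vertical distance `|(e y).1 - Γ (e y).2|` to that graph. Integrating
fibrewise over a tube around the graph gives the Morrey-type bound
`∫_{Ω ∩ B(x,r)} d_K^{-α} ≤ A r^{N-α}`: each fibre contributes `∫_{|u| ≤ r} |u|^{-α} du = O(r^{k-α})`
on `ℝ^k`, which is finite because `α < k`, and compactness of `K` and boundedness of `Ω` make `A`
uniform. Splitting the Riesz kernel `|x - y|^{γ-N}` into dyadic shells around `x` and applying the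
Morrey bound on each shell gives a geometric series of ratio `2^{α-γ}`, which converges because
`α < γ`.
-/

open MeasureTheory

/-- `K` is a compact `C²` submanifold of `ℝ^N` of codimension `k`, described locally
(after a linear change of coordinates) as the graph of a `C²` map. -/
def IsC2CompactSubmanifold (N k : ℕ) (K : Set (EuclideanSpace ℝ (Fin N))) : Prop :=
  IsCompact K ∧ K.Nonempty ∧
  ∀ ξ ∈ K, ∃ (e : EuclideanSpace ℝ (Fin N) ≃L[ℝ]
      EuclideanSpace ℝ (Fin k) × EuclideanSpace ℝ (Fin (N - k)))
    (β : ℝ) (Γ : EuclideanSpace ℝ (Fin (N - k)) → EuclideanSpace ℝ (Fin k)),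
    0 < β ∧ ContDiff ℝ 2 Γ ∧
    ∀ x, dist x ξ < β → (x ∈ K ↔ (e x).1 = Γ (e x).2)

/-- `Ω` is a bounded `C²` domain of `ℝ^N`: open, bounded, and its boundary is locally
(after a linear change of coordinates) the graph of a `C²` function, with `Ω` on one side. -/
def IsC2BoundedDomain (N : ℕ) (Ω : Set (EuclideanSpace ℝ (Fin N))) : Prop :=
  IsOpen Ω ∧ Bornology.IsBounded Ω ∧ Ω.Nonempty ∧
  ∀ ξ ∈ frontier Ω, ∃ (e : EuclideanSpace ℝ (Fin N) ≃L[ℝ]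
      ℝ × EuclideanSpace ℝ (Fin (N - 1)))
    (β : ℝ) (γ : EuclideanSpace ℝ (Fin (N - 1)) → ℝ),
    0 < β ∧ ContDiff ℝ 2 γ ∧
    ∀ x, dist x ξ < β → (x ∈ Ω ↔ γ (e x).2 < (e x).1)

open Metric Set
open scoped ENNReal NNReal

theorem ENNReal.rpow_le_rpow_of_nonpos {a b : ℝ≥0∞} (hab : a ≤ b) {p : ℝ} (hp : p ≤ 0) :
    b ^ p ≤ a ^ p := by
  obtain ⟨q, rfl⟩ : ∃ q, p = -q := ⟨-p, (neg_neg p).symm⟩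
  rw [ENNReal.rpow_neg, ENNReal.rpow_neg]
  exact ENNReal.inv_le_inv.2 (ENNReal.rpow_le_rpow hab (by linarith))

theorem ENNReal.ofReal_rpow_le_ofReal_rpow {a : ℝ} (ha : 0 ≤ a) (p : ℝ) :
    ENNReal.ofReal (a ^ p) ≤ ENNReal.ofReal a ^ p := by
  rcases le_or_gt 0 p with hp | hp
  · exact (ENNReal.ofReal_rpow_of_nonneg ha hp).ge
  rcases ha.eq_or_lt with rfl | ha
  · simp [ENNReal.zero_rpow_of_neg hp]
  · exact (ENNReal.ofReal_rpow_of_pos ha).ge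

theorem ofReal_rpow_neg_le_mul_enorm_rpow_neg {E : Type*} [SeminormedAddCommGroup E] {a M α : ℝ}
    {v : E} (hM : 0 < M) (hα : 0 < α) (ha : 0 ≤ a) (hv : ‖v‖ ≤ M * a) :
    ENNReal.ofReal (a ^ (-α)) ≤ ENNReal.ofReal (M ^ α) * ‖v‖ₑ ^ (-α) := by
  -- at `a = 0` the left side is the junk value `0 ^ (-α) = 0`
  rcases ha.eq_or_lt with rfl | ha
  · simp [Real.zero_rpow (neg_ne_zero.2 hα.ne')]
  calc ENNReal.ofReal (a ^ (-α)) = ENNReal.ofReal (M ^ α) * ENNReal.ofReal (M * a) ^ (-α) := by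
        rw [ENNReal.ofReal_rpow_of_pos (by positivity), ← ENNReal.ofReal_mul (by positivity),
          Real.mul_rpow hM.le ha.le, ← mul_assoc, ← Real.rpow_add hM, add_neg_cancel,
          Real.rpow_zero, one_mul]
    _ ≤ ENNReal.ofReal (M ^ α) * ‖v‖ₑ ^ (-α) := by
        rw [← ofReal_norm]
        exact mul_le_mul_right (ENNReal.rpow_le_rpow_of_nonpos (ENNReal.ofReal_le_ofReal hv)
          (neg_nonpos.2 hα.le)) _

section Dyadic

variable {X : Type*} [MetricSpace X]

def dyadicShell (x : X) (D : ℝ) (j : ℕ) : Set X :=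
  {y | D * 2⁻¹ ^ (j + 1) < dist x y ∧ dist x y ≤ D * 2⁻¹ ^ j}

theorem measurableSet_dyadicShell [MeasurableSpace X] [OpensMeasurableSpace X] (x : X) (D : ℝ)
    (j : ℕ) : MeasurableSet (dyadicShell x D j) :=
  (measurableSet_lt measurable_const (continuous_const.dist continuous_id).measurable).inter
    (measurableSet_le (continuous_const.dist continuous_id).measurable measurable_const)

theorem exists_mem_dyadicShell {x y : X} {D : ℝ} (hxy : x ≠ y) (hD : dist x y ≤ D) :
    ∃ j, y ∈ dyadicShell x D j := by
  have hd : 0 < dist x y := dist_pos.2 hxy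
  obtain ⟨j, hj, hj'⟩ := exists_nat_pow_near ((one_le_div hd).2 hD) one_lt_two
  refine ⟨j, ?_, ?_⟩
  · rw [inv_pow, ← div_eq_mul_inv, div_lt_iff₀ (by positivity)]
    rwa [div_lt_iff₀ hd, mul_comm] at hj'
  · rw [inv_pow, ← div_eq_mul_inv, le_div_iff₀ (by positivity)]
    rwa [le_div_iff₀ hd, mul_comm] at hj

theorem rpow_dyadic_inner_mul_rpow_dyadic_outer {D : ℝ} (hD : 0 < D) (p s : ℝ) (j : ℕ) :
    (D * 2⁻¹ ^ (j + 1)) ^ p * (2 * (D * 2⁻¹ ^ j)) ^ s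
      = 2 ^ (s - p) * D ^ (p + s) * (2⁻¹ ^ (p + s)) ^ j := by
  set a := D * 2⁻¹ ^ j
  have ha : 0 < a := by positivity
  have hpow : a ^ p * a ^ s = D ^ (p + s) * (2⁻¹ ^ (p + s)) ^ j := by
    rw [← Real.rpow_add ha, Real.mul_rpow hD.le (by positivity), Real.rpow_pow_comm (by norm_num)]
  calc (D * 2⁻¹ ^ (j + 1)) ^ p * (2 * a) ^ s = 2⁻¹ ^ p * 2 ^ s * (a ^ p * a ^ s) := by
        rw [show D * 2⁻¹ ^ (j + 1) = 2⁻¹ * a by ring, Real.mul_rpow (by norm_num) ha.le,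
          Real.mul_rpow (by norm_num) ha.le]
        ring
    _ = 2 ^ (s - p) * D ^ (p + s) * (2⁻¹ ^ (p + s)) ^ j := by
        rw [hpow, Real.inv_rpow (by norm_num), Real.rpow_sub two_pos]
        ring

variable [MeasurableSpace X] [OpensMeasurableSpace X] {μ : Measure X} {x : X} {g : X → ℝ≥0∞}
  {A : ℝ≥0∞} {p s D : ℝ}

theorem lintegral_dyadicShell_edist_rpow_mul_le (hp : p ≤ 0) (hD : 0 < D)
    (hg : ∀ r, 0 < r → ∫⁻ y in ball x r, g y ∂μ ≤ A * ENNReal.ofReal (r ^ s)) (j : ℕ) :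
    ∫⁻ y in dyadicShell x D j, edist x y ^ p * g y ∂μ
      ≤ A * ENNReal.ofReal (2 ^ (s - p) * D ^ (p + s)) * ENNReal.ofReal (2⁻¹ ^ (p + s)) ^ j := by
  set ρ := D * 2⁻¹ ^ j
  have hρ : 0 < ρ := by positivity
  calc ∫⁻ y in dyadicShell x D j, edist x y ^ p * g y ∂μ
      ≤ ∫⁻ y in dyadicShell x D j, ENNReal.ofReal ((D * 2⁻¹ ^ (j + 1)) ^ p) * g y ∂μ := by
        refine setLIntegral_mono' (measurableSet_dyadicShell x D j) fun y hy =>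
          mul_le_mul_left ?_ _
        rw [← ENNReal.ofReal_rpow_of_pos (by positivity), edist_dist]
        exact ENNReal.rpow_le_rpow_of_nonpos (ENNReal.ofReal_le_ofReal hy.1.le) hp
    _ = ENNReal.ofReal ((D * 2⁻¹ ^ (j + 1)) ^ p) * ∫⁻ y in dyadicShell x D j, g y ∂μ :=
        lintegral_const_mul' _ _ ENNReal.ofReal_ne_top
    _ ≤ ENNReal.ofReal ((D * 2⁻¹ ^ (j + 1)) ^ p) * (A * ENNReal.ofReal ((2 * ρ) ^ s)) := by
        refine mul_le_mul_right ((lintegral_mono_set fun y hy => ?_).trans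
          (hg _ (by positivity))) _
        have hyρ : dist x y ≤ ρ := hy.2
        rw [mem_ball, dist_comm]
        linarith
    _ = _ := by
        rw [← ENNReal.ofReal_pow (by positivity), mul_left_comm, mul_assoc,
          ← ENNReal.ofReal_mul (by positivity), ← ENNReal.ofReal_mul (by positivity),
          rpow_dyadic_inner_mul_rpow_dyadic_outer hD]

theorem lintegral_edist_rpow_mul_le (hp : p ≤ 0) (hps : 0 < p + s) (hD : 0 < D)
    (hx : μ {x} = 0) (hsupp : μ (closedBall x D)ᶜ = 0)
    (hg : ∀ r, 0 < r → ∫⁻ y in ball x r, g y ∂μ ≤ A * ENNReal.ofReal (r ^ s)) :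
    ∫⁻ y, edist x y ^ p * g y ∂μ
      ≤ A * ENNReal.ofReal (2 ^ (s - p) / (1 - 2⁻¹ ^ (p + s)) * D ^ (p + s)) := by
  set q : ℝ := 2⁻¹ ^ (p + s)
  have hq0 : 0 < q := by positivity
  have hq1 : q < 1 := Real.rpow_lt_one (by norm_num) (by norm_num) hps
  have hcover : (univ : Set X) ≤ᵐ[μ] ⋃ j, dyadicShell x D j := by
    refine ae_le_set.2 (measure_mono_null (fun y hy => ?_) (measure_union_null hx hsupp))
    obtain ⟨-, hy⟩ := hy
    by_contra hxy
    simp only [mem_union, mem_singleton_iff, mem_compl_iff, mem_closedBall, not_or,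
      not_not] at hxy
    obtain ⟨j, hj⟩ := exists_mem_dyadicShell (Ne.symm hxy.1) ((dist_comm x y).trans_le hxy.2)
    exact hy (mem_iUnion.2 ⟨j, hj⟩)
  calc ∫⁻ y, edist x y ^ p * g y ∂μ
      ≤ ∫⁻ y in ⋃ j, dyadicShell x D j, edist x y ^ p * g y ∂μ := by
        rw [← setLIntegral_univ]
        exact lintegral_mono_set' hcover
    _ ≤ ∑' j, ∫⁻ y in dyadicShell x D j, edist x y ^ p * g y ∂μ := lintegral_iUnion_le _ _
    _ ≤ ∑' j, A * ENNReal.ofReal (2 ^ (s - p) * D ^ (p + s)) * ENNReal.ofReal q ^ j :=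
        ENNReal.tsum_le_tsum (lintegral_dyadicShell_edist_rpow_mul_le hp hD hg)
    _ = A * ENNReal.ofReal (2 ^ (s - p) / (1 - q) * D ^ (p + s)) := by
        rw [ENNReal.tsum_mul_left, ENNReal.tsum_geometric, ← ENNReal.ofReal_one,
          ← ENNReal.ofReal_sub _ hq0.le, ← ENNReal.ofReal_inv_of_pos (by linarith), mul_assoc,
          ← ENNReal.ofReal_mul (by positivity)]
        ring_nf

end Dyadic

theorem Bornology.IsBounded.exists_integral_dist_rpow_mul_le {X : Type*} [MetricSpace X]
    [MeasurableSpace X] [OpensMeasurableSpace X] {μ : Measure X} [NullSingletonClass μ]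
    {Ω : Set X} (hΩ : Bornology.IsBounded Ω) {G : X → ℝ} (hG0 : ∀ y, 0 ≤ G y)
    (hG : Measurable G) {p s : ℝ} {A : ℝ≥0∞} (hp : p ≤ 0) (hps : 0 < p + s) (hA : A ≠ ⊤)
    (hmorrey : ∀ x r, 0 < r →
      ∫⁻ y in ball x r, ENNReal.ofReal (G y) ∂μ.restrict Ω ≤ A * ENNReal.ofReal (r ^ s)) :
    ∃ C : ℝ, 0 < C ∧ ∀ x ∈ Ω, ∫ y in Ω, dist x y ^ p * G y ∂μ ≤ C := by
  obtain ⟨D, hD⟩ := isBounded_iff.1 hΩ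
  set D' := max D 1
  set B := A * ENNReal.ofReal (2 ^ (s - p) / (1 - 2⁻¹ ^ (p + s)) * D' ^ (p + s))
  refine ⟨B.toReal + 1, by positivity, fun x hx => ?_⟩
  have hsupp : μ.restrict Ω (closedBall x D')ᶜ = 0 := by
    rw [Measure.restrict_apply measurableSet_closedBall.compl]
    refine measure_mono_null (fun y ⟨hyc, hyΩ⟩ => hyc ?_) measure_empty
    exact mem_closedBall.2 ((hD hyΩ hx).trans (le_max_left _ _))
  have hlint := lintegral_edist_rpow_mul_le hp hps (lt_max_of_lt_right one_pos)
    (nonpos_iff_eq_zero.1 ((Measure.restrict_apply_le _ _).trans (measure_singleton x).le))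
    hsupp (hmorrey x)
  have hpt (y : X) :
      ENNReal.ofReal (dist x y ^ p * G y) ≤ edist x y ^ p * ENNReal.ofReal (G y) := by
    rw [ENNReal.ofReal_mul (Real.rpow_nonneg dist_nonneg _), edist_dist]
    exact mul_le_mul_left (ENNReal.ofReal_rpow_le_ofReal_rpow dist_nonneg _) _
  rw [integral_eq_lintegral_of_nonneg_ae
    (ae_of_all _ fun y => mul_nonneg (Real.rpow_nonneg dist_nonneg _) (hG0 y))
    (show Measurable fun y => dist x y ^ p * G y from
      ((continuous_const.dist continuous_id).measurable.pow_const p).mul hG).aestronglyMeasurable]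
  exact (ENNReal.toReal_mono (by finiteness) ((lintegral_mono hpt).trans hlint)).trans
    (le_add_of_nonneg_right zero_le_one)

theorem Bornology.IsBounded.exists_lintegral_ball_restrict_le {X : Type*} [MetricSpace X]
    [ProperSpace X] [MeasurableSpace X] [OpensMeasurableSpace X] {Ω : Set X}
    (hΩ : Bornology.IsBounded Ω) {μ : Measure X} {g : X → ℝ≥0∞} {s r₀ : ℝ} {A : ℝ≥0∞}
    (hs : 0 ≤ s) (hr₀ : 0 < r₀) (hA : A ≠ ⊤)
    (hloc : ∀ x r, 0 < r → r ≤ r₀ → ∫⁻ y in ball x r, g y ∂μ ≤ A * ENNReal.ofReal (r ^ s)) :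
    ∃ A' : ℝ≥0∞, A' ≠ ⊤ ∧ ∀ x r, 0 < r →
      ∫⁻ y in ball x r, g y ∂μ.restrict Ω ≤ A' * ENNReal.ofReal (r ^ s) := by
  obtain ⟨t, -, hcover⟩ := hΩ.isCompact_closure.elim_nhds_subcover (fun x => ball x r₀)
    fun x _ => ball_mem_nhds x hr₀
  set B := t.card * (A * ENNReal.ofReal (r₀ ^ s))
  have hΩB : ∫⁻ y in Ω, g y ∂μ ≤ B :=
    calc ∫⁻ y in Ω, g y ∂μ ≤ ∫⁻ y in ⋃ x : t, ball (x : X) r₀, g y ∂μ :=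
          lintegral_mono_set (subset_closure.trans (hcover.trans fun y hy => by
            obtain ⟨i, hi, hyi⟩ := mem_iUnion₂.1 hy
            exact mem_iUnion.2 ⟨⟨i, hi⟩, hyi⟩))
      _ ≤ ∑' x : t, ∫⁻ y in ball (x : X) r₀, g y ∂μ := lintegral_iUnion_le _ _
      _ ≤ ∑' _ : t, A * ENNReal.ofReal (r₀ ^ s) :=
          ENNReal.tsum_le_tsum fun x => hloc x r₀ hr₀ le_rfl
      _ = B := by rw [tsum_fintype, Finset.sum_const, Finset.card_univ, Fintype.card_coe,
          nsmul_eq_mul]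
  refine ⟨A + B * ENNReal.ofReal (r₀ ^ (-s)), by finiteness, fun x r hr => ?_⟩
  rw [Measure.restrict_restrict measurableSet_ball]
  rcases le_or_gt r r₀ with hrr₀ | hr₀r
  · calc _ ≤ ∫⁻ y in ball x r, g y ∂μ := lintegral_mono_set inter_subset_left
      _ ≤ A * ENNReal.ofReal (r ^ s) := hloc x r hr hrr₀
      _ ≤ _ := by gcongr; exact le_self_add
  · have hone : 1 ≤ ENNReal.ofReal (r₀ ^ (-s)) * ENNReal.ofReal (r ^ s) := by
      rw [← ENNReal.ofReal_mul (by positivity), ENNReal.one_le_ofReal, Real.rpow_neg hr₀.le,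
        one_le_inv_mul₀ (by positivity)]
      exact Real.rpow_le_rpow hr₀.le hr₀r.le hs
    calc _ ≤ ∫⁻ y in Ω, g y ∂μ := lintegral_mono_set inter_subset_right
      _ ≤ B * (ENNReal.ofReal (r₀ ^ (-s)) * ENNReal.ofReal (r ^ s)) :=
          hΩB.trans (le_mul_of_one_le_right' hone)
      _ ≤ _ := by rw [← mul_assoc]; gcongr; exact le_add_self

theorem exists_lintegral_closedBall_enorm_rpow_neg_le {E : Type*} [NormedAddCommGroup E]
    [NormedSpace ℝ E] [FiniteDimensional ℝ E] [MeasurableSpace E] [BorelSpace E]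
    (μ : Measure E) [μ.IsAddHaarMeasure] {α : ℝ} (hα0 : 0 ≤ α)
    (hα : α < Module.finrank ℝ E) :
    ∃ κ : ℝ, ∀ R, 0 < R → ∫⁻ u in closedBall 0 R, ‖u‖ₑ ^ (-α) ∂μ
      ≤ μ (ball 0 1) * ENNReal.ofReal (κ * R ^ (Module.finrank ℝ E - α)) := by
  set d := Module.finrank ℝ E
  have : Nontrivial E :=
    Module.nontrivial_of_finrank_pos (R := ℝ) (by exact_mod_cast hα0.trans_lt hα)
  refine ⟨2 ^ (d + α) / (1 - 2⁻¹ ^ (d - α)), fun R hR => ?_⟩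
  have hvol (r : ℝ) (hr : 0 < r) :
      ∫⁻ _ in ball 0 r, 1 ∂μ.restrict (closedBall 0 R)
        ≤ μ (ball 0 1) * ENNReal.ofReal (r ^ (d : ℝ)) := by
    rw [setLIntegral_one, Real.rpow_natCast, mul_comm, ← Measure.addHaar_ball μ 0 hr.le]
    exact Measure.restrict_le_self _
  have key := lintegral_edist_rpow_mul_le (x := 0) (neg_nonpos.2 hα0) (by linarith) hR
    (nonpos_iff_eq_zero.1 ((Measure.restrict_le_self _).trans (measure_singleton 0).le))
    (by rw [Measure.restrict_apply measurableSet_closedBall.compl, compl_inter_self, measure_empty])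
    hvol
  simpa [edist_zero_left, ← enorm_eq_nnnorm, neg_add_eq_sub] using key

theorem lintegral_prod_indicator_sub_graph {U W : Type*} [AddGroup U] [MeasurableSpace U]
    [MeasurableAdd U] [MeasurableSub₂ U] [MeasurableSpace W] (μ : Measure U)
    [μ.IsAddRightInvariant] [SFinite μ] (ν : Measure W) [SFinite ν] {Γ : W → U}
    (hΓ : Measurable Γ) {B : Set W} {C : Set U} (hB : MeasurableSet B) (hC : MeasurableSet C)
    {f : U → ℝ≥0∞} (hf : Measurable f) :
    ∫⁻ p, B.indicator 1 p.2 * C.indicator f (p.1 - Γ p.2) ∂μ.prod ν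
      = ν B * ∫⁻ v in C, f v ∂μ := by
  have hmeas : Measurable fun p : U × W => B.indicator 1 p.2 * C.indicator f (p.1 - Γ p.2) :=
    ((measurable_const.indicator hB).comp measurable_snd).mul
      ((hf.indicator hC).comp (measurable_fst.sub (hΓ.comp measurable_snd)))
  rw [lintegral_prod_symm _ hmeas.aemeasurable]
  have hfiber (w : W) : ∫⁻ u, B.indicator 1 w * C.indicator f (u - Γ w) ∂μ
      = B.indicator 1 w * ∫⁻ v in C, f v ∂μ := by
    rw [lintegral_const_mul (f := fun u => C.indicator f (u - Γ w)) _
        ((hf.indicator hC).comp (measurable_sub_const (Γ w))),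
      lintegral_sub_right_eq_self (C.indicator f), lintegral_indicator hC]
  simp_rw [hfiber]
  rw [lintegral_mul_const _ (measurable_one.indicator hB), lintegral_indicator_one hB]

theorem exists_lintegral_comp_continuousLinearEquiv {E F : Type*} [NormedAddCommGroup E]
    [NormedSpace ℝ E] [FiniteDimensional ℝ E] [MeasurableSpace E] [BorelSpace E]
    [NormedAddCommGroup F] [NormedSpace ℝ F] [FiniteDimensional ℝ F] [MeasurableSpace F]
    [BorelSpace F] (μ : Measure E) [μ.IsAddHaarMeasure] (ν : Measure F) [ν.IsAddHaarMeasure]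
    (e : E ≃L[ℝ] F) :
    ∃ c : ℝ≥0, ∀ h : F → ℝ≥0∞, ∫⁻ y, h (e y) ∂μ = c * ∫⁻ z, h z ∂ν := by
  refine ⟨(μ.map e).addHaarScalarFactor ν, fun h => ?_⟩
  calc ∫⁻ y, h (e y) ∂μ = ∫⁻ z, h z ∂μ.map e :=
        (lintegral_map_equiv h e.toHomeomorph.toMeasurableEquiv).symm
    _ = _ := by
        conv_lhs => rw [Measure.isAddLeftInvariant_eq_smul (μ.map e) ν]
        rw [lintegral_smul_measure]
        rfl

theorem norm_fst_sub_graph_le {E U W : Type*} [PseudoMetricSpace E] [SeminormedAddCommGroup U]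
    [PseudoMetricSpace W] {e : E → U × W} {Le : ℝ≥0} (he : LipschitzWith Le e) {Γ : W → U}
    {L : ℝ≥0} {s : Set W} (hΓ : LipschitzOnWith L Γ s) {y z : E} (hy : (e y).2 ∈ s)
    (hz : (e z).2 ∈ s) (hzΓ : (e z).1 = Γ (e z).2) :
    ‖(e y).1 - Γ (e y).2‖ ≤ (1 + L) * Le * dist y z := by
  have hfst : dist (e y).1 (e z).1 ≤ Le * dist y z :=
    (le_max_left _ _).trans_eq Prod.dist_eq.symm |>.trans (he.dist_le_mul y z)
  have hsnd : dist (e z).2 (e y).2 ≤ Le * dist y z :=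
    (le_max_right _ _).trans_eq Prod.dist_eq.symm |>.trans
      ((he.dist_le_mul z y).trans_eq (by rw [dist_comm]))
  calc ‖(e y).1 - Γ (e y).2‖ ≤ ‖(e y).1 - (e z).1‖ + ‖(e z).1 - Γ (e y).2‖ :=
        norm_sub_le_norm_sub_add_norm_sub _ _ _
    _ = dist (e y).1 (e z).1 + dist (Γ (e z).2) (Γ (e y).2) := by
        rw [hzΓ, dist_eq_norm, dist_eq_norm]
    _ ≤ Le * dist y z + L * (Le * dist y z) :=
        add_le_add hfst ((hΓ.dist_le_mul _ hz _ hy).trans (by gcongr))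
    _ = (1 + L) * Le * dist y z := by ring

section Chart

variable {E U W : Type*} [NormedAddCommGroup E] [NormedSpace ℝ E] [NormedAddCommGroup U]
  [NormedSpace ℝ U] [NormedAddCommGroup W] [NormedSpace ℝ W]

theorem norm_fst_sub_graph_le_infDist {K : Set E} (hKc : IsCompact K) (hKne : K.Nonempty)
    {ξ : E} {β : ℝ} {e : E →L[ℝ] U × W} {Γ : W → U} {L : ℝ≥0}
    (hL : LipschitzOnWith L Γ (closedBall (e ξ).2 (‖e‖ * β)))
    (hgraph : ∀ z ∈ K, dist z ξ < β → (e z).1 = Γ (e z).2) {x y : E} {r : ℝ}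
    (hyK : infDist y K ≤ r) (hyx : dist y x < r) (hxr : dist x ξ + 2 * r < β) :
    ‖(e y).1 - Γ (e y).2‖ ≤ (1 + L) * ‖e‖ * infDist y K := by
  obtain ⟨z, hzK, hyz⟩ := hKc.exists_infDist_eq_dist hKne y
  have hyξ : dist y ξ < β := by linarith [dist_triangle y x ξ, dist_nonneg (x := y) (y := x)]
  have hzξ : dist z ξ < β := by
    linarith [dist_triangle4 z y x ξ, dist_comm z y, dist_nonneg (x := y) (y := x)]
  have hW (v : E) (hv : dist v ξ < β) : (e v).2 ∈ closedBall (e ξ).2 (‖e‖ * β) :=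
    ((le_max_right _ _).trans_eq Prod.dist_eq.symm).trans
      ((e.lipschitz.dist_le_mul v ξ).trans (by rw [coe_nnnorm]; gcongr))
  rw [hyz]
  exact norm_fst_sub_graph_le e.lipschitz hL (hW y hyξ) (hW z hzξ) (hgraph z hzK hzξ)

variable [FiniteDimensional ℝ E] [MeasurableSpace E] [BorelSpace E] [FiniteDimensional ℝ U]
  [MeasurableSpace U] [BorelSpace U] [FiniteDimensional ℝ W] [MeasurableSpace W] [BorelSpace W]

theorem exists_lintegral_infDist_rpow_le_tube [Nontrivial E] (μ : Measure E) [μ.IsAddHaarMeasure]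
    (μU : Measure U) [μU.IsAddHaarMeasure] (μW : Measure W) [μW.IsAddHaarMeasure] {α : ℝ}
    (hα : 0 < α) {K : Set E} (hKc : IsCompact K) (hKne : K.Nonempty) {ξ : E} {β : ℝ}
    (e : E ≃L[ℝ] U × W) {Γ : W → U} (hΓ : Measurable Γ) {L : ℝ≥0}
    (hL : LipschitzOnWith L Γ (closedBall (e ξ).2 (‖(e : E →L[ℝ] U × W)‖ * β)))
    (hgraph : ∀ z ∈ K, dist z ξ < β → (e z).1 = Γ (e z).2) :
    ∃ c : ℝ≥0, ∀ x r, 0 < r → dist x ξ + 2 * r < β →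
      ∫⁻ y in {y | infDist y K ≤ r} ∩ ball x r, ENNReal.ofReal (infDist y K ^ (-α)) ∂μ
        ≤ c * ENNReal.ofReal (((1 + L) * ‖(e : E →L[ℝ] U × W)‖) ^ α) *
          (μW (closedBall (e x).2 (‖(e : E →L[ℝ] U × W)‖ * r)) *
            ∫⁻ v in closedBall 0 ((1 + L) * ‖(e : E →L[ℝ] U × W)‖ * r), ‖v‖ₑ ^ (-α) ∂μU) := by
  set eL : E →L[ℝ] U × W := e.toContinuousLinearMap
  set M := (1 + (L : ℝ)) * ‖eL‖
  have hM : 0 < M := by have := e.norm_pos; positivity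
  obtain ⟨c, hc⟩ := exists_lintegral_comp_continuousLinearEquiv μ (μU.prod μW) e
  refine ⟨c, fun x r hr hxr => ?_⟩
  set f : U → ℝ≥0∞ := fun v => ‖v‖ₑ ^ (-α)
  set B := closedBall (e x).2 (‖eL‖ * r)
  set C := closedBall (0 : U) (M * r)
  have hpt : ∀ y ∈ {y | infDist y K ≤ r} ∩ ball x r, ENNReal.ofReal (infDist y K ^ (-α))
      ≤ ENNReal.ofReal (M ^ α) * (B.indicator 1 (e y).2 * C.indicator f ((e y).1 - Γ (e y).2)) := by
    rintro y ⟨hyK, hyx⟩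
    replace hyK : infDist y K ≤ r := hyK
    rw [mem_ball] at hyx
    have hgr := norm_fst_sub_graph_le_infDist (e := eL) hKc hKne hL hgraph hyK hyx hxr
    have hB : (e y).2 ∈ B := ((le_max_right _ _).trans_eq Prod.dist_eq.symm).trans
      ((eL.lipschitz.dist_le_mul y x).trans (by rw [coe_nnnorm]; gcongr))
    have hC : (e y).1 - Γ (e y).2 ∈ C := by
      rw [mem_closedBall, dist_zero_right]
      exact hgr.trans (by gcongr)
    rw [indicator_of_mem hB, indicator_of_mem hC, Pi.one_apply, one_mul]
    exact ofReal_rpow_neg_le_mul_enorm_rpow_neg hM hα infDist_nonneg hgr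
  have hS : MeasurableSet ({y | infDist y K ≤ r} ∩ ball x r) :=
    (measurableSet_le (continuous_infDist_pt K).measurable measurable_const).inter
      measurableSet_ball
  calc ∫⁻ y in {y | infDist y K ≤ r} ∩ ball x r, ENNReal.ofReal (infDist y K ^ (-α)) ∂μ
      ≤ ∫⁻ y, ENNReal.ofReal (M ^ α) *
          (B.indicator 1 (e y).2 * C.indicator f ((e y).1 - Γ (e y).2)) ∂μ :=
        (setLIntegral_mono' hS hpt).trans (setLIntegral_le_lintegral _ _)
    _ = c * ENNReal.ofReal (M ^ α) * (μW B * ∫⁻ v in C, f v ∂μU) := by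
        rw [hc fun p => ENNReal.ofReal (M ^ α) * (B.indicator 1 p.2 * C.indicator f (p.1 - Γ p.2)),
          lintegral_const_mul' _ _ ENNReal.ofReal_ne_top,
          lintegral_prod_indicator_sub_graph (f := f) _ _ hΓ measurableSet_closedBall
            measurableSet_closedBall (measurable_id.enorm.pow_const _)]
        exact (mul_assoc _ _ _).symm

end Chart

theorem exists_lintegral_infDist_rpow_le_of_chart {N k : ℕ} (hkN : k ≤ N) {α : ℝ}
    (hα0 : 0 < α) (hαk : α < k) {K : Set (EuclideanSpace ℝ (Fin N))} (hKc : IsCompact K)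
    (hKne : K.Nonempty) {ξ : EuclideanSpace ℝ (Fin N)}
    (e : EuclideanSpace ℝ (Fin N) ≃L[ℝ] EuclideanSpace ℝ (Fin k) × EuclideanSpace ℝ (Fin (N - k)))
    {β : ℝ} {Γ : EuclideanSpace ℝ (Fin (N - k)) → EuclideanSpace ℝ (Fin k)}
    (hΓ : ContDiff ℝ 1 Γ) (hgraph : ∀ z ∈ K, dist z ξ < β → (e z).1 = Γ (e z).2) :
    ∃ A : ℝ≥0∞, A ≠ ⊤ ∧ ∀ x r, 0 < r → dist x ξ + 2 * r < β →
      ∫⁻ y in {y | infDist y K ≤ r} ∩ ball x r, ENNReal.ofReal (infDist y K ^ (-α))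
        ≤ A * ENNReal.ofReal (r ^ ((N : ℝ) - α)) := by
  have : Nonempty (Fin N) := ⟨⟨0, (Nat.cast_pos.1 (hα0.trans hαk)).trans_le hkN⟩⟩
  set a := ‖e.toContinuousLinearMap‖
  obtain ⟨L, hL⟩ := hΓ.locallyLipschitz.locallyLipschitzOn.exists_lipschitzOnWith_of_compact
    (isCompact_closedBall (e ξ).2 (a * β))
  obtain ⟨κ, hκ⟩ := exists_lintegral_closedBall_enorm_rpow_neg_le
    (volume : Measure (EuclideanSpace ℝ (Fin k))) hα0.le (by simpa using hαk)
  simp only [finrank_euclideanSpace_fin] at hκ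
  obtain ⟨c, hc⟩ := exists_lintegral_infDist_rpow_le_tube volume volume volume hα0 hKc hKne e
    hΓ.continuous.measurable hL hgraph
  set M := (1 + (L : ℝ)) * a
  have hM : 0 < M := by have := e.norm_pos; positivity
  set Vk := volume (ball (0 : EuclideanSpace ℝ (Fin k)) 1)
  set Vm := volume (ball (0 : EuclideanSpace ℝ (Fin (N - k))) 1)
  refine ⟨c * ENNReal.ofReal (M ^ α) * (Vm * Vk) *
      ENNReal.ofReal (a ^ (N - k) * κ * M ^ ((k : ℝ) - α)), by finiteness,
    fun x r hr hxr => ?_⟩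
  have hreal : (a * r) ^ (N - k) * (κ * (M * r) ^ ((k : ℝ) - α))
      = a ^ (N - k) * κ * M ^ ((k : ℝ) - α) * r ^ ((N : ℝ) - α) := by
    rw [mul_pow, Real.mul_rpow hM.le hr.le, ← Real.rpow_natCast r,
      show (N : ℝ) - α = ((N - k : ℕ) : ℝ) + ((k : ℝ) - α) by rw [Nat.cast_sub hkN]; ring,
      Real.rpow_add hr]
    ring
  calc _ ≤ _ := hc x r hr hxr
    _ ≤ c * ENNReal.ofReal (M ^ α) * (volume (closedBall (e x).2 (a * r)) *
          (Vk * ENNReal.ofReal (κ * (M * r) ^ ((k : ℝ) - α)))) := by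
        gcongr
        exact hκ _ (by positivity)
    _ = c * ENNReal.ofReal (M ^ α) * (Vm * Vk) * (ENNReal.ofReal ((a * r) ^ (N - k)) *
          ENNReal.ofReal (κ * (M * r) ^ ((k : ℝ) - α))) := by
        rw [Measure.addHaar_closedBall volume _ (by positivity), finrank_euclideanSpace_fin]
        ring
    _ = _ := by
        rw [← ENNReal.ofReal_mul (by positivity), hreal, ENNReal.ofReal_mul' (by positivity)]
        ring

theorem IsC2CompactSubmanifold.exists_lintegral_near_infDist_rpow_le {N k : ℕ} (hkN : k ≤ N)
    {α : ℝ} (hα0 : 0 < α) (hαk : α < k) {K : Set (EuclideanSpace ℝ (Fin N))}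
    (hK : IsC2CompactSubmanifold N k K) :
    ∃ r₀ > 0, ∃ A : ℝ≥0∞, A ≠ ⊤ ∧ ∀ x r, 0 < r → r ≤ r₀ →
      ∫⁻ y in {y | infDist y K ≤ r} ∩ ball x r, ENNReal.ofReal (infDist y K ^ (-α))
        ≤ A * ENNReal.ofReal (r ^ ((N : ℝ) - α)) := by
  obtain ⟨hKc, hKne, hchart⟩ := hK
  choose e β Γ hβ hΓ hgraph using hchart
  choose A hA hbound using fun ξ (hξ : ξ ∈ K) =>
    exists_lintegral_infDist_rpow_le_of_chart hkN hα0 hαk hKc hKne (e ξ hξ)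
      ((hΓ ξ hξ).of_le one_le_two) fun z hz hzξ => (hgraph ξ hξ z hzξ).1 hz
  obtain ⟨t, ht⟩ := hKc.elim_nhds_subcover' (fun ξ hξ => ball ξ (β ξ hξ / 2))
    fun ξ hξ => ball_mem_nhds ξ (half_pos (hβ ξ hξ))
  have htne : t.Nonempty := by
    obtain ⟨ζ, hζ⟩ := hKne
    obtain ⟨i, hi, -⟩ := mem_iUnion₂.1 (ht hζ)
    exact ⟨i, hi⟩
  set β₀ := t.inf' htne fun i => β i i.2
  have hβ₀ : 0 < β₀ := (Finset.lt_inf'_iff _).2 fun i _ => hβ i i.2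
  refine ⟨β₀ / 8, by positivity, ∑ i ∈ t, A i i.2, ENNReal.sum_ne_top.2 fun i _ => hA i i.2,
    fun x r hr hrβ => ?_⟩
  rcases ({y | infDist y K ≤ r} ∩ ball x r).eq_empty_or_nonempty with hS | ⟨y₀, hy₀K, hy₀x⟩
  · simp [hS]
  obtain ⟨z₀, hz₀K, hz₀⟩ := hKc.exists_infDist_eq_dist hKne y₀
  obtain ⟨i, hi, hz₀i⟩ := mem_iUnion₂.1 (ht hz₀K)
  have hβi : β₀ ≤ β i i.2 := Finset.inf'_le _ hi
  -- `dist x z₀ < 2r`, `z₀ ∈ ball i (β/2)` and `r ≤ β/8` put `x` well inside the chart at `i`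
  have hxi : dist x i + 2 * r < β i i.2 := by
    have := mem_ball.1 hz₀i
    have := mem_ball.1 hy₀x
    have : dist y₀ z₀ ≤ r := hz₀ ▸ hy₀K
    linarith [dist_triangle4 x y₀ z₀ i, dist_comm x y₀]
  exact (hbound i i.2 x r hr hxi).trans
    (mul_le_mul_left (Finset.single_le_sum (f := fun i : K => A i i.2) (fun _ _ => zero_le) hi) _)

theorem IsC2CompactSubmanifold.exists_lintegral_ball_infDist_rpow_le {N k : ℕ} (hkN : k ≤ N)
    {α : ℝ} (hα0 : 0 < α) (hαk : α < k) {K : Set (EuclideanSpace ℝ (Fin N))}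
    (hK : IsC2CompactSubmanifold N k K) :
    ∃ r₀ > 0, ∃ A : ℝ≥0∞, A ≠ ⊤ ∧ ∀ x r, 0 < r → r ≤ r₀ →
      ∫⁻ y in ball x r, ENNReal.ofReal (infDist y K ^ (-α))
        ≤ A * ENNReal.ofReal (r ^ ((N : ℝ) - α)) := by
  have : Nonempty (Fin N) := ⟨⟨0, (Nat.cast_pos.1 (hα0.trans hαk)).trans_le hkN⟩⟩
  obtain ⟨r₀, hr₀, A, hA, hnear⟩ := hK.exists_lintegral_near_infDist_rpow_le hkN hα0 hαk
  set V := volume (ball (0 : EuclideanSpace ℝ (Fin N)) 1)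
  refine ⟨r₀, hr₀, A + V, by finiteness, fun x r hr hrr₀ => ?_⟩
  have hfar : ∫⁻ y in {y | r < infDist y K} ∩ ball x r, ENNReal.ofReal (infDist y K ^ (-α))
      ≤ V * ENNReal.ofReal (r ^ ((N : ℝ) - α)) :=
    calc _ ≤ ∫⁻ _ in {y | r < infDist y K} ∩ ball x r, ENNReal.ofReal (r ^ (-α)) :=
          setLIntegral_mono measurable_const fun y hy => ENNReal.ofReal_le_ofReal
            (Real.rpow_le_rpow_of_nonpos hr (le_of_lt hy.1) (by linarith))
      _ ≤ ∫⁻ _ in ball x r, ENNReal.ofReal (r ^ (-α)) := lintegral_mono_set inter_subset_right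
      _ = ENNReal.ofReal (r ^ (-α)) * (ENNReal.ofReal (r ^ N) * V) := by
          rw [setLIntegral_const, Measure.addHaar_ball volume x hr.le, finrank_euclideanSpace_fin]
      _ = V * ENNReal.ofReal (r ^ ((N : ℝ) - α)) := by
          rw [← mul_assoc, ← ENNReal.ofReal_mul (by positivity), ← Real.rpow_natCast,
            ← Real.rpow_add hr, mul_comm, neg_add_eq_sub]
  calc ∫⁻ y in ball x r, ENNReal.ofReal (infDist y K ^ (-α))
      ≤ ∫⁻ y in ({y | infDist y K ≤ r} ∩ ball x r) ∪ ({y | r < infDist y K} ∩ ball x r),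
          ENNReal.ofReal (infDist y K ^ (-α)) :=
        lintegral_mono_set fun y hy => (le_or_gt (infDist y K) r).imp (⟨·, hy⟩) (⟨·, hy⟩)
    _ ≤ A * ENNReal.ofReal (r ^ ((N : ℝ) - α)) + V * ENNReal.ofReal (r ^ ((N : ℝ) - α)) :=
        (lintegral_union_le _ _ _).trans (add_le_add (hnear x r hr hrr₀) hfar)
    _ = (A + V) * ENNReal.ofReal (r ^ ((N : ℝ) - α)) := (add_mul _ _ _).symm

theorem IsC2CompactSubmanifold.exists_lintegral_ball_restrict_le {N k : ℕ} (hkN : k ≤ N)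
    {α : ℝ} (hα0 : 0 < α) (hαk : α < k) {K : Set (EuclideanSpace ℝ (Fin N))}
    (hK : IsC2CompactSubmanifold N k K) {Ω : Set (EuclideanSpace ℝ (Fin N))}
    (hΩ : Bornology.IsBounded Ω) :
    ∃ A : ℝ≥0∞, A ≠ ⊤ ∧ ∀ x r, 0 < r →
      ∫⁻ y in ball x r, ENNReal.ofReal (infDist y K ^ (-α)) ∂volume.restrict Ω
        ≤ A * ENNReal.ofReal (r ^ ((N : ℝ) - α)) := by
  obtain ⟨r₀, hr₀, A, hA, hball⟩ := hK.exists_lintegral_ball_infDist_rpow_le hkN hα0 hαk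
  exact hΩ.exists_lintegral_ball_restrict_le
    (by linarith [(Nat.cast_le.2 hkN : (k : ℝ) ≤ N)]) hr₀ hA hball

theorem stmt11_general (N k : ℕ) (hkN : k ≤ N)
    (Ω K : Set (EuclideanSpace ℝ (Fin N)))
    (hΩ : IsC2BoundedDomain N Ω) (hK : IsC2CompactSubmanifold N k K)
    (γ α : ℝ) (hγ : γ < N) (hα0 : 0 < α) (hαk : α < k) (hαγ : α < γ) :
    ∃ C : ℝ, 0 < C ∧ ∀ x ∈ Ω,
      ∫ y in Ω, dist x y ^ (-(N : ℝ) + γ) * Metric.infDist y K ^ (-α) ≤ C := by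
  have : Nonempty (Fin N) := ⟨⟨0, (Nat.cast_pos.1 (hα0.trans hαk)).trans_le hkN⟩⟩
  obtain ⟨-, hΩb, -, -⟩ := hΩ
  obtain ⟨A, hA, hmorrey⟩ := hK.exists_lintegral_ball_restrict_le hkN hα0 hαk hΩb
  exact hΩb.exists_integral_dist_rpow_mul_le (G := fun y => infDist y K ^ (-α))
    (s := N - α) (fun y => Real.rpow_nonneg infDist_nonneg _)
    ((continuous_infDist_pt K).measurable.pow_const _) (by linarith) (by linarith) hA hmorrey

/-- Uniform Riesz-potential estimate with distance weight: for `γ < N` and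
`α ∈ (0, min{k,γ})`, `sup_{x∈Ω} ∫_Ω |x-y|^{γ-N} d_K(y)^{-α} dy ≤ C`. -/
theorem stmt11 (N k : ℕ) (hN : 3 ≤ N) (hk1 : 1 ≤ k) (hkN : k ≤ N)
    (Ω K : Set (EuclideanSpace ℝ (Fin N)))
    (hΩ : IsC2BoundedDomain N Ω) (hK : IsC2CompactSubmanifold N k K)
    (hKΩ : K ⊆ frontier Ω)
    (γ α : ℝ) (hγ : γ < N) (hα0 : 0 < α) (hαk : α < k) (hαγ : α < γ) :
    ∃ C : ℝ, 0 < C ∧ ∀ x ∈ Ω,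
      ∫ y in Ω, dist x y ^ (-(N : ℝ) + γ) * Metric.infDist y K ^ (-α) ≤ C :=
  stmt11_general N k hkN Ω K hΩ hK γ α hγ hα0 hαk hαγ
end

section
/- For 0 < h < 1, define η_h : (0,1) → [0,1] by η_h(t) = 1 for t > h, η_h(t) = 1 - (ln h)^{-1} ln(t/h) for h² ≤ t ≤ h, and η_h(t) = 0 for t < h². Then for any k ≥ 1 and γ ≥ -k, (ln h)^{-2} ∫_{h²}^{h} ∫₀¹ (t + r)^γ r^{k-2} dr dt → 0 as h → 0⁺. -/
open MeasureTheory Set Filter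

private lemma inner_bound {k : ℕ} (hk2 : (2:ℝ) ≤ k) {γ t : ℝ} (hγ : -(k : ℝ) ≤ γ)
    (ht : 0 < t) (ht1 : t ≤ 1) :
    ‖∫ r in Set.Ioc (0 : ℝ) 1, (t + r) ^ γ * r ^ ((k : ℝ) - 2)‖ ≤
      2 ^ (γ + k) * t⁻¹ := by
  have hC : (0:ℝ) < 2 ^ (γ + k) := Real.rpow_pos_of_pos two_pos _
  have hint : IntegrableOn (fun r : ℝ => 2 ^ (γ + k) * (t + r) ^ (-2 : ℝ)) (Set.Ioc 0 1) := by
    apply (ContinuousOn.integrableOn_Icc ?_).mono_set Set.Ioc_subset_Icc_self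
    apply ContinuousOn.const_smul (c := (2:ℝ) ^ (γ + k)) ?_ |>.congr (fun x _ => rfl)
    apply ContinuousOn.rpow_const (by fun_prop)
    intro x hx
    exact Or.inl (by have := hx.1; positivity)
  have hbound : ∀ᵐ r ∂(volume.restrict (Set.Ioc (0:ℝ) 1)),
      ‖(t + r) ^ γ * r ^ ((k : ℝ) - 2)‖ ≤ 2 ^ (γ + k) * (t + r) ^ (-2 : ℝ) := by
    filter_upwards [ae_restrict_mem measurableSet_Ioc] with r hr
    have hr0 : 0 < r := hr.1
    have htr : 0 < t + r := by linarith
    have h1 : r ^ ((k : ℝ) - 2) ≤ (t + r) ^ ((k : ℝ) - 2) :=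
      Real.rpow_le_rpow hr0.le (by linarith) (by linarith)
    have h2 : (t + r) ^ γ * (t + r) ^ ((k : ℝ) - 2) = (t + r) ^ (γ + k) * (t + r) ^ (-2 : ℝ) := by
      rw [← Real.rpow_add htr, ← Real.rpow_add htr]; ring_nf
    have h3 : (t + r) ^ (γ + k) ≤ 2 ^ (γ + k) :=
      Real.rpow_le_rpow htr.le (by linarith [hr.2]) (by linarith)
    rw [norm_mul, Real.norm_eq_abs, Real.norm_eq_abs,
      abs_of_nonneg (Real.rpow_nonneg htr.le _), abs_of_nonneg (Real.rpow_nonneg hr0.le _)]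
    calc (t + r) ^ γ * r ^ ((k : ℝ) - 2) ≤ (t + r) ^ γ * (t + r) ^ ((k : ℝ) - 2) := by
          exact mul_le_mul_of_nonneg_left h1 (Real.rpow_nonneg htr.le _)
      _ = (t + r) ^ (γ + k) * (t + r) ^ (-2 : ℝ) := h2
      _ ≤ 2 ^ (γ + k) * (t + r) ^ (-2 : ℝ) :=
          mul_le_mul_of_nonneg_right h3 (Real.rpow_nonneg htr.le _)
  calc ‖∫ r in Set.Ioc (0:ℝ) 1, (t + r) ^ γ * r ^ ((k : ℝ) - 2)‖
      ≤ ∫ r in Set.Ioc (0:ℝ) 1, 2 ^ (γ + k) * (t + r) ^ (-2 : ℝ) :=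
        norm_integral_le_of_norm_le hint hbound
    _ = 2 ^ (γ + k) * ∫ r in Set.Ioc (0:ℝ) 1, (t + r) ^ (-2 : ℝ) := by
        rw [integral_const_mul]
    _ ≤ 2 ^ (γ + k) * t⁻¹ := by
        apply mul_le_mul_of_nonneg_left _ hC.le
        have he : ∫ r in Set.Ioc (0:ℝ) 1, (t + r) ^ (-2 : ℝ)
            = ∫ r in (0:ℝ)..1, (t + r) ^ (-2 : ℝ) :=
          (intervalIntegral.integral_of_le zero_le_one).symm
        rw [he, intervalIntegral.integral_comp_add_left (fun x => x ^ (-2:ℝ)) t]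
        simp only [add_zero]
        rw [integral_rpow (Or.inr ⟨by norm_num, by
            rw [Set.uIcc_of_le (by linarith)]
            intro h0
            exact absurd h0.1 (not_le.mpr ht)⟩)]
        have h1 : (0:ℝ) < t + 1 := by linarith
        rw [show (-2:ℝ) + 1 = -1 by norm_num, Real.rpow_neg_one, Real.rpow_neg_one]
        have h2 : (0:ℝ) ≤ (t + 1)⁻¹ := by positivity
        rw [div_le_iff_of_neg (by norm_num : (-1:ℝ) < 0)]
        linarith

/-- Quantitative decay behind the logarithmic cutoff argument: for `k ≥ 1` and
`γ ≥ -k`, `(ln h)⁻² ∫_{h²}^h ∫₀¹ (t+r)^γ r^{k-2} dr dt → 0` as `h → 0⁺`. -/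
theorem stmt13 (k : ℕ) (hk : 1 ≤ k) (γ : ℝ) (hγ : -(k : ℝ) ≤ γ) :
    Filter.Tendsto (fun h : ℝ =>
        (Real.log h ^ 2)⁻¹ *
          ∫ t in Set.Ioc (h ^ 2) h, ∫ r in Set.Ioc (0 : ℝ) 1,
            (t + r) ^ γ * r ^ ((k : ℝ) - 2))
      (nhdsWithin 0 (Set.Ioi 0)) (nhds 0) := by
  have hmem : Set.Ioo (0:ℝ) 1 ∈ nhdsWithin (0:ℝ) (Set.Ioi 0) :=
    Ioo_mem_nhdsGT_of_mem ⟨le_refl 0, one_pos⟩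
  rcases eq_or_lt_of_le hk with h1 | hk2
  · -- k = 1 : the inner integral is divergent, hence `0` as a Bochner integral.
    have hk1 : k = 1 := h1.symm
    subst hk1
    apply Filter.Tendsto.congr' _ tendsto_const_nhds (f₁ := fun _ => (0:ℝ))
    filter_upwards [hmem] with h hh
    obtain ⟨hh0, hh1⟩ := hh
    have hh2 : (0:ℝ) < h ^ 2 := by positivity
    have hzero : Set.EqOn
        (fun t : ℝ => ∫ r in Set.Ioc (0 : ℝ) 1, (t + r) ^ γ * r ^ (((1:ℕ) : ℝ) - 2))
        (fun _ => (0:ℝ)) (Set.Ioc (h ^ 2) h) := by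
      intro t ht
      have ht0 : 0 < t := lt_trans hh2 ht.1
      apply integral_undef
      intro hint
      have hint' : IntegrableOn (fun r : ℝ => (t + r) ^ γ * r ^ (((1:ℕ) : ℝ) - 2))
          (Set.Ioo (0:ℝ) 1) := by
        have hIoc : IntegrableOn (fun r : ℝ => (t + r) ^ γ * r ^ (((1:ℕ) : ℝ) - 2))
            (Set.Ioc (0:ℝ) 1) := hint
        exact hIoc.mono_set Set.Ioo_subset_Ioc_self
      set c : ℝ := min (t ^ γ) ((t + 1) ^ γ) with hc
      have hcpos : 0 < c :=
        lt_min (Real.rpow_pos_of_pos ht0 γ) (Real.rpow_pos_of_pos (by linarith) γ)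
      have hle : ∀ r ∈ Set.Ioo (0:ℝ) 1,
          c * r ^ (-1:ℝ) ≤ (t + r) ^ γ * r ^ (((1:ℕ) : ℝ) - 2) := by
        intro r hr
        have hr0 : 0 < r := hr.1
        have he : (((1:ℕ) : ℝ) - 2) = (-1 : ℝ) := by norm_num
        rw [he]
        have hcb : c ≤ (t + r) ^ γ := by
          rcases le_or_gt 0 γ with hγ0 | hγ0
          · exact le_trans (min_le_left _ _)
              (Real.rpow_le_rpow ht0.le (by linarith) hγ0)
          · exact le_trans (min_le_right _ _)
              (Real.rpow_le_rpow_of_nonpos (by linarith) (by linarith [hr.2]) hγ0.le)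
        exact mul_le_mul_of_nonneg_right hcb (Real.rpow_nonneg hr0.le _)
      have hci : IntegrableOn (fun r : ℝ => c * r ^ (-1:ℝ)) (Set.Ioo (0:ℝ) 1) := by
        have hm : Measurable (fun r : ℝ => c * r ^ (-1:ℝ)) := by
          simp only [Real.rpow_neg_one]
          exact measurable_inv.const_mul c
        apply hint'.mono' hm.aestronglyMeasurable
        filter_upwards [ae_restrict_mem measurableSet_Ioo] with r hr
        rw [Real.norm_eq_abs,
          abs_of_nonneg (mul_nonneg hcpos.le (Real.rpow_nonneg hr.1.le _))]
        exact hle r hr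
      have hri : IntegrableOn (fun r : ℝ => r ^ (-1:ℝ)) (Set.Ioo (0:ℝ) 1) := by
        have h2 : (fun r : ℝ => r ^ (-1:ℝ)) = fun r => c⁻¹ * (c * r ^ (-1:ℝ)) := by
          funext r; field_simp
        rw [h2]; exact hci.const_mul _
      rw [intervalIntegral.integrableOn_Ioo_rpow_iff one_pos] at hri
      norm_num at hri
    rw [setIntegral_congr_fun measurableSet_Ioc hzero]
    simp
  · -- k ≥ 2
    have hk2' : (2:ℝ) ≤ k := by exact_mod_cast hk2
    set C : ℝ := 2 ^ (γ + k) with hC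
    have hCpos : (0:ℝ) < C := Real.rpow_pos_of_pos two_pos _
    apply squeeze_zero_norm' (a := fun h : ℝ => C * (-Real.log h)⁻¹)
    · filter_upwards [hmem] with h hh
      obtain ⟨hh0, hh1⟩ := hh
      have hlog : Real.log h < 0 := Real.log_neg hh0 hh1
      set L : ℝ := -Real.log h with hL
      have hLpos : 0 < L := by simp [hL]; linarith
      have hsq : Real.log h ^ 2 = L ^ 2 := by rw [hL]; ring
      have hh2 : 0 < h ^ 2 := by positivity
      have hhle : h ^ 2 ≤ h := by nlinarith
      -- integrability of the majorant C * t⁻¹ on (h², h]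
      have hint : IntegrableOn (fun t : ℝ => C * t⁻¹) (Set.Ioc (h ^ 2) h) := by
        apply (ContinuousOn.integrableOn_Icc ?_).mono_set Set.Ioc_subset_Icc_self
        apply ContinuousOn.mul continuousOn_const
        apply ContinuousOn.inv₀ continuousOn_id
        intro x hx
        simp only [id_eq]
        exact ne_of_gt (lt_of_lt_of_le hh2 hx.1)
      have hbound : ∀ᵐ t ∂(volume.restrict (Set.Ioc (h ^ 2) h)),
          ‖∫ r in Set.Ioc (0 : ℝ) 1, (t + r) ^ γ * r ^ ((k : ℝ) - 2)‖ ≤ C * t⁻¹ := by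
        filter_upwards [ae_restrict_mem measurableSet_Ioc] with t ht
        exact inner_bound hk2' hγ (lt_trans hh2 ht.1) (le_trans ht.2 hh1.le)
      have hnorm : ‖∫ t in Set.Ioc (h ^ 2) h, ∫ r in Set.Ioc (0 : ℝ) 1,
          (t + r) ^ γ * r ^ ((k : ℝ) - 2)‖ ≤ C * L := by
        calc ‖∫ t in Set.Ioc (h ^ 2) h, ∫ r in Set.Ioc (0 : ℝ) 1,
              (t + r) ^ γ * r ^ ((k : ℝ) - 2)‖
            ≤ ∫ t in Set.Ioc (h ^ 2) h, C * t⁻¹ :=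
              norm_integral_le_of_norm_le hint hbound
          _ = C * ∫ t in Set.Ioc (h ^ 2) h, t⁻¹ := integral_const_mul _ _
          _ = C * L := by
              congr 1
              rw [← intervalIntegral.integral_of_le hhle,
                integral_inv (by
                  rw [Set.uIcc_of_le hhle]
                  intro h0
                  exact absurd h0.1 (not_le.mpr hh2))]
              rw [Real.log_div (by positivity) (by positivity), Real.log_pow]
              push_cast
              rw [hL]; ring
      rw [norm_mul, Real.norm_eq_abs, Real.norm_eq_abs, hsq,
        abs_of_nonneg (by positivity : (0:ℝ) ≤ (L ^ 2)⁻¹)]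
      calc (L ^ 2)⁻¹ * |∫ t in Set.Ioc (h ^ 2) h, ∫ r in Set.Ioc (0 : ℝ) 1,
            (t + r) ^ γ * r ^ ((k : ℝ) - 2)|
          ≤ (L ^ 2)⁻¹ * (C * L) := by
            apply mul_le_mul_of_nonneg_left _ (by positivity)
            exact (Real.norm_eq_abs _) ▸ hnorm
        _ = C * L⁻¹ := by field_simp
    · have h1 : Filter.Tendsto (fun h : ℝ => -Real.log h) (nhdsWithin 0 (Set.Ioi 0)) atTop := by
        rw [← Filter.tendsto_neg_atBot_iff]
        simpa using Real.tendsto_log_nhdsGT_zero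
      have := (h1.inv_tendsto_atTop).const_mul C
      simpa using this
end
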